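/- arXiv:2006.10847 — 9 statements merged into one kernel-verified Lean document; each statement's English description precedes it below -/
import Mathlib

section
/- Let A be an integer m×n matrix, b an integer m-vector, and let P_I be the convex hull of the nonnegative integer solutions of Ax = b. If v is a vertex of P_I, then there is no non-zero integer vector x with Ax = 0, x_i = 0 for all i outside supp(v), and -1 ≤ x_i ≤ 1 for all i in supp(v). -/
open Matrix

/-- The integer hull of `{x ≥ 0 : Ax = b}`: the convex hull of the nonnegative
integer solutions, viewed as real vectors. -/
def integerHull {m n : ℕ} (A : Matrix (Fin m) (Fin n) ℤ) (b : Fin m → ℤ) :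
    Set (Fin n → ℝ) :=
  convexHull ℝ
    {x | ∃ z : Fin n → ℤ, (∀ i, 0 ≤ z i) ∧ A.mulVec z = b ∧ x = fun i => (z i : ℝ)}

/-- `v` is a vertex of `P` if `v ∈ P` and `v` is not in the convex hull of `P \ {v}`. -/
def IsVertex {n : ℕ} (P : Set (Fin n → ℝ)) (v : Fin n → ℝ) : Prop :=
  v ∈ P ∧ v ∉ convexHull ℝ (P \ {v})

theorem stmt0 {m n : ℕ} (A : Matrix (Fin m) (Fin n) ℤ) (b : Fin m → ℤ)
    (v : Fin n → ℝ) (hv : IsVertex (integerHull A b) v) :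
    ¬ ∃ x : Fin n → ℤ, x ≠ 0 ∧ A.mulVec x = 0 ∧
        (∀ i, v i = 0 → x i = 0) ∧ (∀ i, v i ≠ 0 → -1 ≤ x i ∧ x i ≤ 1) := by
  rintro ⟨x, hx0, hAx, hsupp, hbd⟩
  obtain ⟨hvP, hvnot⟩ := hv
  set S : Set (Fin n → ℝ) :=
    {x | ∃ z : Fin n → ℤ, (∀ i, 0 ≤ z i) ∧ A.mulVec z = b ∧ x = fun i => (z i : ℝ)} with hS
  -- v ∈ S
  have hvS : v ∈ S := by
    by_contra hvnS
    have hsub : S ⊆ integerHull A b \ {v} := by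
      intro y hy
      exact ⟨subset_convexHull ℝ S hy, fun h => hvnS (Set.mem_singleton_iff.mp h ▸ hy)⟩
    exact hvnot (convexHull_mono hsub hvP)
  obtain ⟨z, hz0, hAz, hvz⟩ := hvS
  -- pointwise facts
  have key : ∀ i, 0 ≤ z i + x i ∧ 0 ≤ z i - x i := by
    intro i
    by_cases hzi : z i = 0
    · have : v i = 0 := by rw [hvz]; simp [hzi]
      have := hsupp i this
      constructor <;> omega
    · have hvi : v i ≠ 0 := by
        rw [hvz]; simp only [ne_eq, Int.cast_eq_zero]; exact hzi
      have := hbd i hvi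
      have := hz0 i
      constructor <;> omega
  -- two new points
  have h1 : (fun i => ((z i + x i : ℤ) : ℝ)) ∈ S :=
    ⟨z + x, fun i => (key i).1, by rw [mulVec_add, hAz, hAx, add_zero], rfl⟩
  have h2 : (fun i => ((z i - x i : ℤ) : ℝ)) ∈ S :=
    ⟨z - x, fun i => (key i).2, by rw [mulVec_sub, hAz, hAx, sub_zero], rfl⟩
  have hxne : ∃ i, x i ≠ 0 := by
    by_contra h
    push_neg at h
    exact hx0 (funext h)
  obtain ⟨i0, hi0⟩ := hxne
  have hne1 : (fun i => ((z i + x i : ℤ) : ℝ)) ≠ v := by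
    intro h
    apply hi0
    have := congrFun h i0
    rw [hvz] at this
    push_cast at this
    have : (x i0 : ℝ) = 0 := by linarith
    exact_mod_cast this
  have hne2 : (fun i => ((z i - x i : ℤ) : ℝ)) ≠ v := by
    intro h
    apply hi0
    have := congrFun h i0
    rw [hvz] at this
    push_cast at this
    have : (x i0 : ℝ) = 0 := by linarith
    exact_mod_cast this
  have m1 : (fun i => ((z i + x i : ℤ) : ℝ)) ∈ convexHull ℝ (integerHull A b \ {v}) :=
    subset_convexHull ℝ _ ⟨subset_convexHull ℝ S h1, hne1⟩
  have m2 : (fun i => ((z i - x i : ℤ) : ℝ)) ∈ convexHull ℝ (integerHull A b \ {v}) :=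
    subset_convexHull ℝ _ ⟨subset_convexHull ℝ S h2, hne2⟩
  apply hvnot
  have := (convex_convexHull ℝ (integerHull A b \ {v})) m1 m2
    (by norm_num : (0:ℝ) ≤ 1/2) (by norm_num : (0:ℝ) ≤ 1/2) (by norm_num)
  convert this using 1
  rw [hvz]
  funext i
  simp only [Pi.add_apply, Pi.smul_apply, smul_eq_mul]
  push_cast
  ring
end

section
/- Let a ∈ ℤ^n be a non-zero vector and b ∈ ℤ. If v is a vertex of the integer hull of the knapsack polytope {x ≥ 0 : aᵀx = b} with support of size s, then 2^s ≤ ‖a‖₁ + 1; equivalently s ≤ log₂(‖a‖₁ + 1). -/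
/-- The integer hull of the knapsack polytope `{x ≥ 0 : aᵀx = b}`. -/
def knapsackHull {n : ℕ} (a : Fin n → ℤ) (b : ℤ) : Set (Fin n → ℝ) :=
  convexHull ℝ
    {x | ∃ z : Fin n → ℤ, (∀ i, 0 ≤ z i) ∧ (∑ i, a i * z i) = b ∧ x = fun i => (z i : ℝ)}

/-!
A vertex of the integer hull is an extreme point, hence one of the integer points `z`. The
`2 ^ s` subset sums of `a` over `supp z` lie in an interval containing at most `‖a‖₁ + 1`
integers, so if `2 ^ s > ‖a‖₁ + 1` two different subsets have the same sum. The difference `c`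
of their indicator vectors is a non-zero kernel vector of `aᵀ` with entries in `{-1, 0, 1}`,
supported on `supp z`; then `z + c` and `z - c` are feasible and `z` is their midpoint.
-/

open Finset

section SubsetSums

variable {ι : Type*}

theorem sum_mem_Icc_of_subset (a : ι → ℤ) {U T : Finset ι} (hU : U ⊆ T) :
    ∑ i ∈ U, a i ∈ Icc (-∑ i ∈ T, (a i)⁻) (∑ i ∈ T, (a i)⁺) := by
  have hpos : ∑ i ∈ U, (a i)⁺ ≤ ∑ i ∈ T, (a i)⁺ :=
    sum_le_sum_of_subset_of_nonneg hU fun i _ _ => posPart_nonneg _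
  have hneg : ∑ i ∈ U, (a i)⁻ ≤ ∑ i ∈ T, (a i)⁻ :=
    sum_le_sum_of_subset_of_nonneg hU fun i _ _ => negPart_nonneg _
  have hsplit : ∑ i ∈ U, a i = ∑ i ∈ U, (a i)⁺ - ∑ i ∈ U, (a i)⁻ := by
    simp only [← sum_sub_distrib, posPart_sub_negPart]
  rw [mem_Icc, hsplit]
  constructor <;> linarith [sum_nonneg fun i (_ : i ∈ U) => posPart_nonneg (a i),
    sum_nonneg fun i (_ : i ∈ U) => negPart_nonneg (a i)]

theorem exists_ne_subsets_sum_eq_of_sum_abs_lt (a : ι → ℤ) {T : Finset ι}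
    (hT : ∑ i ∈ T, |a i| + 1 < 2 ^ #T) :
    ∃ U ⊆ T, ∃ W ⊆ T, U ≠ W ∧ ∑ i ∈ U, a i = ∑ i ∈ W, a i := by
  have hcard : #(Icc (-∑ i ∈ T, (a i)⁻) (∑ i ∈ T, (a i)⁺)) < #T.powerset := by
    have hwidth : ∑ i ∈ T, (a i)⁺ + 1 - -∑ i ∈ T, (a i)⁻ = ∑ i ∈ T, |a i| + 1 := by
      simp only [← posPart_add_negPart, sum_add_distrib]
      ring
    rw [Int.card_Icc, hwidth, card_powerset, Int.toNat_lt' (by positivity)]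
    exact_mod_cast hT
  obtain ⟨U, hU, W, hW, hUW, hsum⟩ := exists_ne_map_eq_of_card_lt_of_maps_to hcard
    fun U hU => sum_mem_Icc_of_subset a (mem_powerset.mp hU)
  exact ⟨U, mem_powerset.mp hU, W, mem_powerset.mp hW, hUW, hsum⟩

theorem exists_ternary_kernel_vector_of_sum_abs_lt [Fintype ι] (a : ι → ℤ) {T : Finset ι}
    (hT : ∑ i ∈ T, |a i| + 1 < 2 ^ #T) :
    ∃ c : ι → ℤ, c ≠ 0 ∧ (∀ i, |c i| ≤ 1) ∧ (∀ i ∉ T, c i = 0) ∧ ∑ i, a i * c i = 0 := by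
  classical
  obtain ⟨U, hU, W, hW, hUW, hsum⟩ := exists_ne_subsets_sum_eq_of_sum_abs_lt a hT
  refine ⟨fun i => (if i ∈ U then 1 else 0) - (if i ∈ W then 1 else 0), ?_, ?_, ?_, ?_⟩
  · obtain ⟨i, hi⟩ := not_forall.mp (mt Finset.ext_iff.mpr hUW)
    intro h
    have := congrFun h i
    by_cases hiU : i ∈ U <;> by_cases hiW : i ∈ W <;> simp_all
  · intro i
    dsimp only
    split_ifs <;> simp
  · intro i hi
    have hiU : i ∉ U := fun h => hi (hU h)
    have hiW : i ∉ W := fun h => hi (hW h)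
    simp [hiU, hiW]
  · simp only [mul_sub, mul_ite, mul_one, mul_zero, sum_sub_distrib, sum_ite_mem, univ_inter,
      hsum, sub_self]

end SubsetSums

theorem eq_zero_of_add_mem_of_sub_mem_of_mem_extremePoints {𝕜 E : Type*} [Ring 𝕜] [LinearOrder 𝕜]
    [IsStrictOrderedRing 𝕜] [Invertible (2 : 𝕜)] [AddCommGroup E] [Module 𝕜 E] {A : Set E}
    {x y : E} (hx : x ∈ A.extremePoints 𝕜) (hadd : x + y ∈ A) (hsub : x - y ∈ A) : y = 0 := by
  simpa using hx.2 hadd hsub (mem_openSegment_add_sub x y)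

theorem isVertex_iff_mem_extremePoints {n : ℕ} {P : Set (Fin n → ℝ)} (hP : Convex ℝ P)
    {v : Fin n → ℝ} : IsVertex P v ↔ v ∈ P.extremePoints ℝ :=
  (hP.mem_extremePoints_iff_mem_sdiff_convexHull_sdiff).symm

theorem intCast_add_mem_knapsackHull {n : ℕ} {a : Fin n → ℤ} {b : ℤ} {z c : Fin n → ℤ}
    (hzb : ∑ i, a i * z i = b) (hac : ∑ i, a i * c i = 0) (hcz : ∀ i, |c i| ≤ z i) :
    (fun i => (z i : ℝ)) + (fun i => (c i : ℝ)) ∈ knapsackHull a b :=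
  subset_convexHull ℝ _ ⟨z + c, fun i => show 0 ≤ z i + c i by linarith [neg_abs_le (c i), hcz i],
    by simp [mul_add, sum_add_distrib, hzb, hac], by ext; simp⟩

theorem stmt1_general {n : ℕ} (a : Fin n → ℤ) (b : ℤ) (v : Fin n → ℝ)
    (hv : IsVertex (knapsackHull a b) v) :
    (2 : ℤ) ^ (Function.support v).ncard ≤ (∑ i, |a i|) + 1 := by
  have hext : v ∈ (knapsackHull a b).extremePoints ℝ :=
    (isVertex_iff_mem_extremePoints (convex_convexHull ℝ _)).mp hv
  obtain ⟨z, hz0, hzb, rfl⟩ := extremePoints_convexHull_subset hext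
  set T := univ.filter fun i => z i ≠ 0
  have hsupp : (Function.support fun i => (z i : ℝ)) = T := by
    ext i
    simp [T]
  rw [hsupp, Set.ncard_coe_finset]
  by_contra! hlt
  have hT : ∑ i ∈ T, |a i| + 1 < 2 ^ #T :=
    lt_of_le_of_lt (add_le_add_left (sum_le_univ_sum_of_nonneg fun i => abs_nonneg (a i)) 1) hlt
  obtain ⟨c, hc0, hc1, hcT, hac⟩ := exists_ternary_kernel_vector_of_sum_abs_lt a hT
  have hcz : ∀ i, |c i| ≤ z i := fun i => by
    by_cases hi : i ∈ T
    · have : z i ≠ 0 := by simpa [T] using hi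
      linarith [hc1 i, Int.one_le_abs this, abs_of_nonneg (hz0 i)]
    · simp [hcT i hi, hz0 i]
  have hadd := intCast_add_mem_knapsackHull hzb hac hcz
  have hsub := intCast_add_mem_knapsackHull (c := -c) hzb (by simpa using hac) (by simpa using hcz)
  have hc : (fun i => (c i : ℝ)) = 0 :=
    eq_zero_of_add_mem_of_sub_mem_of_mem_extremePoints hext hadd
      (by convert hsub using 2; ext; simp [sub_eq_add_neg])
  exact hc0 (funext fun i => by simpa using congrFun hc i)

theorem stmt1 {n : ℕ} (a : Fin n → ℤ) (ha : a ≠ 0) (b : ℤ) (v : Fin n → ℝ)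
    (hv : IsVertex (knapsackHull a b) v) :
    (2 : ℤ) ^ (Function.support v).ncard ≤ (∑ i, |a i|) + 1 :=
  stmt1_general a b v hv
end

section
/- For every vertex v of the integer hull of a knapsack polytope {x ≥ 0 : aᵀx = b} (a ∈ ℤ^n non-zero, b ∈ ℤ), the support size satisfies |supp(v)| ≤ log₂(3.51 · ‖a[supp(v)]‖₂), where a[supp(v)] is the restriction of a to the coordinates in supp(v). -/
open Finset

theorem Int.card_le_of_forall_mem_Icc {A : Finset ℤ} {x y : ℝ} (hxy : x ≤ y)
    (hA : ∀ m ∈ A, x ≤ m ∧ (m : ℝ) ≤ y) : (A.card : ℝ) ≤ y - x + 1 := by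
  have hsub : A ⊆ Icc ⌈x⌉ ⌊y⌋ := fun m hm =>
    mem_Icc.2 ⟨Int.ceil_le.2 (hA m hm).1, Int.le_floor.2 (hA m hm).2⟩
  have hcard := card_le_card hsub
  rw [Int.card_Icc] at hcard
  have hlen : ⌈x⌉ ≤ ⌊y⌋ + 1 := by
    rw [Int.ceil_le]
    push_cast
    linarith [Int.lt_floor_add_one y]
  have : (A.card : ℝ) ≤ ⌊y⌋ + 1 - ⌈x⌉ := by
    exact_mod_cast (by omega : (A.card : ℤ) ≤ ⌊y⌋ + 1 - ⌈x⌉)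
  linarith [Int.le_ceil x, Int.floor_le y]

section SubsetSums

variable {ι : Type*}

def HasDistinctSubsetSums {M : Type*} [AddCommMonoid M] (c : ι → M) (S : Finset ι) : Prop :=
  Set.InjOn (fun T => ∑ i ∈ T, c i) S.powerset

theorem sum_powerset_sq_two_mul_sum_sub_sum [DecidableEq ι] {R : Type*} [CommRing R]
    (c : ι → R) (S : Finset ι) :
    ∑ T ∈ S.powerset, (2 * ∑ i ∈ T, c i - ∑ i ∈ S, c i) ^ 2 = 2 ^ S.card * ∑ i ∈ S, c i ^ 2 := by
  induction S using Finset.induction with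
  | empty => simp
  | @insert a s ha ih =>
    have hpair : ∀ T ∈ s.powerset,
        (2 * ∑ i ∈ T, c i - ∑ i ∈ insert a s, c i) ^ 2
          + (2 * ∑ i ∈ insert a T, c i - ∑ i ∈ insert a s, c i) ^ 2
        = 2 * (2 * ∑ i ∈ T, c i - ∑ i ∈ s, c i) ^ 2 + 2 * c a ^ 2 := by
      intro T hT
      have haT : a ∉ T := fun h => ha (mem_powerset.1 hT h)
      rw [sum_insert ha, sum_insert haT]
      ring
    rw [sum_powerset_insert ha, ← sum_add_distrib, sum_congr rfl hpair, sum_add_distrib,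
      ← mul_sum, ih, sum_const, card_powerset, sum_insert ha, card_insert_of_notMem ha]
    simp only [nsmul_eq_mul]
    push_cast
    ring

theorem three_mul_two_pow_card_le_card_filter [DecidableEq ι] (c : ι → ℝ) (S : Finset ι) :
    3 * 2 ^ S.card ≤ 4 * (#{T ∈ S.powerset |
      (2 * ∑ i ∈ T, c i - ∑ i ∈ S, c i) ^ 2 ≤ 4 * ∑ i ∈ S, c i ^ 2} : ℝ) := by
  set N := ∑ i ∈ S, c i ^ 2
  set d : Finset ι → ℝ := fun T => 2 * ∑ i ∈ T, c i - ∑ i ∈ S, c i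
  have hsplit := card_filter_add_card_filter_not (s := S.powerset) (fun T => d T ^ 2 ≤ 4 * N)
  rw [card_powerset] at hsplit
  suffices hbad : 4 * (#{T ∈ S.powerset | ¬ d T ^ 2 ≤ 4 * N} : ℝ) ≤ 2 ^ S.card by
    have : (#{T ∈ S.powerset | d T ^ 2 ≤ 4 * N} : ℝ) + #{T ∈ S.powerset | ¬ d T ^ 2 ≤ 4 * N}
        = 2 ^ S.card := by exact_mod_cast hsplit
    linarith
  have hmoment : ∑ T ∈ S.powerset, d T ^ 2 = 2 ^ S.card * N :=
    sum_powerset_sq_two_mul_sum_sub_sum c S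
  have hmarkov : (#{T ∈ S.powerset | ¬ d T ^ 2 ≤ 4 * N} : ℝ) * (4 * N) ≤ 2 ^ S.card * N := by
    calc _ = #{T ∈ S.powerset | ¬ d T ^ 2 ≤ 4 * N} • (4 * N) := (nsmul_eq_mul _ _).symm
      _ ≤ ∑ T ∈ S.powerset with ¬ d T ^ 2 ≤ 4 * N, d T ^ 2 :=
          card_nsmul_le_sum _ _ _ fun T hT => (not_le.1 (mem_filter.1 hT).2).le
      _ ≤ ∑ T ∈ S.powerset, d T ^ 2 :=
          sum_le_sum_of_subset_of_nonneg (filter_subset _ _) fun T _ _ => sq_nonneg _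
      _ = 2 ^ S.card * N := hmoment
  have hN0 : 0 ≤ N := sum_nonneg fun i _ => sq_nonneg (c i)
  rcases hN0.eq_or_lt with hN | hN
  · -- for `N = 0` every `d T` vanishes, so no subset is bad
    have hd : ∀ T ∈ S.powerset, d T ^ 2 = 0 :=
      (sum_eq_zero_iff_of_nonneg fun T _ => sq_nonneg _).1 (by rw [hmoment, ← hN, mul_zero])
    rw [filter_false_of_mem fun T hT => by rw [hd T hT, ← hN]; norm_num]
    simp
  · nlinarith

theorem HasDistinctSubsetSums.ne_zero {M : Type*} [AddCommMonoid M] {c : ι → M} {S : Finset ι}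
    (h : HasDistinctSubsetSums c S) {i : ι} (hi : i ∈ S) : c i ≠ 0 := by
  intro hci
  have : ({i} : Finset ι) = ∅ :=
    h (by simpa using hi) (by simp) (by simp [hci])
  simp at this

theorem HasDistinctSubsetSums.card_le_sum_sq {c : ι → ℤ} {S : Finset ι}
    (h : HasDistinctSubsetSums c S) : (S.card : ℝ) ≤ ∑ i ∈ S, (c i : ℝ) ^ 2 := by
  rw [card_eq_sum_ones, Nat.cast_sum, Nat.cast_one]
  refine sum_le_sum fun i hi => ?_
  exact_mod_cast (one_le_sq_iff_one_le_abs _).2 (Int.one_le_abs (h.ne_zero hi))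

theorem HasDistinctSubsetSums.three_mul_two_pow_card_le [DecidableEq ι] {c : ι → ℤ}
    {S : Finset ι} (h : HasDistinctSubsetSums c S) :
    3 * 2 ^ S.card ≤ 8 * √(∑ i ∈ S, (c i : ℝ) ^ 2) + 4 := by
  set N := ∑ i ∈ S, (c i : ℝ) ^ 2
  set σ := ∑ i ∈ S, (c i : ℝ)
  set good := {T ∈ S.powerset | (2 * ∑ i ∈ T, (c i : ℝ) - σ) ^ 2 ≤ 4 * N}
  have hgood : 3 * 2 ^ S.card ≤ 4 * (good.card : ℝ) :=
    three_mul_two_pow_card_le_card_filter (fun i => (c i : ℝ)) S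
  have hN : 0 ≤ N := sum_nonneg fun i _ => sq_nonneg _
  have hsqrt : (2 * √N) ^ 2 = 4 * N := by
    rw [mul_pow, Real.sq_sqrt hN]
    norm_num
  have hvalues : ((good.image fun T => ∑ i ∈ T, c i).card : ℝ) ≤ 2 * √N + 1 := by
    refine (Int.card_le_of_forall_mem_Icc (x := σ / 2 - √N) (y := σ / 2 + √N)
      (by linarith [Real.sqrt_nonneg N]) ?_).trans_eq (by ring)
    simp only [mem_image, mem_filter, good]
    rintro _ ⟨T, ⟨-, hT⟩, rfl⟩
    obtain ⟨hlo, hhi⟩ := abs_le_of_sq_le_sq' (hsqrt ▸ hT) (by positivity)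
    push_cast
    constructor <;> linarith
  rw [card_image_of_injOn (h.mono (coe_subset.2 (filter_subset _ _)))] at hvalues
  linarith

theorem HasDistinctSubsetSums.two_pow_card_le [DecidableEq ι] {c : ι → ℤ} {S : Finset ι}
    (h : HasDistinctSubsetSums c S) (hS : S.Nonempty) :
    (2 : ℝ) ^ S.card ≤ 3.51 * √(∑ i ∈ S, (c i : ℝ) ^ 2) := by
  set r := √(∑ i ∈ S, (c i : ℝ) ^ 2)
  have hr : r ^ 2 = ∑ i ∈ S, (c i : ℝ) ^ 2 := Real.sq_sqrt (sum_nonneg fun i _ => sq_nonneg _)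
  have hr0 : 0 ≤ r := Real.sqrt_nonneg _
  have hmain := h.three_mul_two_pow_card_le
  have hcard := h.card_le_sum_sq
  have hpos := hS.card_pos
  rcases le_or_gt 1.6 r with hr16 | hr16
  · linarith
  · -- then `#S ≤ r² < 2.56`, and `2 ^ s ≤ 2 * s ≤ 2 * r² ≤ 3.51 * r`
    obtain ⟨s, hs⟩ : ∃ s, S.card = s := ⟨_, rfl⟩
    rw [hs] at hcard hpos ⊢
    have hs2 : s ≤ 2 := by
      have : (s : ℝ) < 3 := by nlinarith
      exact Nat.lt_succ_iff.1 (by exact_mod_cast this)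
    have : (2 : ℝ) ^ s ≤ 2 * s := by interval_cases s <;> norm_num
    nlinarith

end SubsetSums

section Vertex

variable {n : ℕ}

theorem IsVertex.mem_of_convexHull {X : Set (Fin n → ℝ)} {v : Fin n → ℝ}
    (hv : IsVertex (convexHull ℝ X) v) : v ∈ X := by
  by_contra hvX
  have hX : X ⊆ convexHull ℝ X \ {v} := fun x hx =>
    ⟨subset_convexHull ℝ X hx, by rintro rfl; exact hvX hx⟩
  exact hv.2 (convexHull_mono hX hv.1)

theorem IsVertex.eq_zero_of_add_mem_of_sub_mem {P : Set (Fin n → ℝ)} {v w : Fin n → ℝ}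
    (hv : IsVertex P v) (hadd : v + w ∈ P) (hsub : v - w ∈ P) : w = 0 := by
  by_contra hw
  have hmid : v ∈ convexHull ℝ {v + w, v - w} := by
    rw [convexHull_pair]
    exact ⟨1 / 2, 1 / 2, by norm_num, by norm_num, by norm_num, by module⟩
  refine hv.2 (convexHull_mono ?_ hmid)
  rintro x (rfl | rfl)
  · exact ⟨hadd, by simpa using hw⟩
  · exact ⟨hsub, by simpa [sub_eq_self] using hw⟩

theorem intCast_mem_knapsackHull {a z : Fin n → ℤ} {b : ℤ} (hz : ∀ i, 0 ≤ z i)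
    (hzb : ∑ i, a i * z i = b) : (fun i => (z i : ℝ)) ∈ knapsackHull a b :=
  subset_convexHull ℝ _ ⟨z, hz, hzb, rfl⟩

theorem hasDistinctSubsetSums_of_isVertex_knapsackHull {a z : Fin n → ℤ} {b : ℤ}
    (hz : ∀ i, 0 ≤ z i) (hzb : ∑ i, a i * z i = b)
    (hv : IsVertex (knapsackHull a b) fun i => (z i : ℝ)) {S : Finset (Fin n)}
    (hS : ∀ i ∈ S, z i ≠ 0) : HasDistinctSubsetSums a S := by
  intro T₁ hT₁ T₂ hT₂ hsum
  simp only [coe_powerset, Set.mem_preimage, Set.mem_powerset_iff, coe_subset] at hT₁ hT₂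
  set e : Fin n → ℤ := fun i => (if i ∈ T₁ then 1 else 0) - (if i ∈ T₂ then 1 else 0)
  have he : ∑ i, a i * e i = 0 := by
    simp only [e, mul_sub, mul_boole, sum_sub_distrib, sum_ite_mem, univ_inter]
    exact sub_eq_zero.2 hsum
  have hez : ∀ i, |e i| ≤ z i := by
    intro i
    by_cases hi : i ∈ S
    · have : 0 < z i := (hz i).lt_of_ne' (hS i hi)
      simp only [e]
      split_ifs <;> simp <;> omega
    · have h₁ : i ∉ T₁ := fun h => hi (hT₁ h)
      have h₂ : i ∉ T₂ := fun h => hi (hT₂ h)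
      simp [e, h₁, h₂, hz i]
  have hadd := intCast_mem_knapsackHull (a := a) (b := b) (z := z + e)
    (fun i => by have := abs_le.1 (hez i); simp only [Pi.add_apply]; omega)
    (by simp only [Pi.add_apply, mul_add, sum_add_distrib, he, hzb, add_zero])
  have hsub := intCast_mem_knapsackHull (a := a) (b := b) (z := z - e)
    (fun i => by have := abs_le.1 (hez i); simp only [Pi.sub_apply]; omega)
    (by simp only [Pi.sub_apply, mul_sub, sum_sub_distrib, he, hzb, sub_zero])
  have hzero := hv.eq_zero_of_add_mem_of_sub_mem (w := fun i => (e i : ℝ))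
    (by convert hadd using 1; ext i; simp) (by convert hsub using 1; ext i; simp)
  ext i
  have := congrFun hzero i
  simp only [e, Pi.zero_apply] at this
  split_ifs at this <;> simp_all

end Vertex

open Classical in
theorem stmt2_general {n : ℕ} (a : Fin n → ℤ) (b : ℤ) (v : Fin n → ℝ)
    (hv : IsVertex (knapsackHull a b) v)
    (S : Finset (Fin n)) (hS : S = Finset.univ.filter (fun i => v i ≠ 0)) :
    (S.card : ℝ) ≤ Real.logb 2 (3.51 * Real.sqrt (∑ i ∈ S, ((a i : ℝ)) ^ 2)) := by
  obtain ⟨z, hz, hzb, rfl⟩ := IsVertex.mem_of_convexHull hv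
  have hdist : HasDistinctSubsetSums a S :=
    hasDistinctSubsetSums_of_isVertex_knapsackHull hz hzb hv fun i hi => by simpa [hS] using hi
  rcases S.eq_empty_or_nonempty with rfl | hne
  · simp
  have hbound := hdist.two_pow_card_le hne
  rw [Real.le_logb_iff_rpow_le one_lt_two ((pow_pos two_pos _).trans_le hbound),
    Real.rpow_natCast]
  exact hbound

open Classical in
theorem stmt2 {n : ℕ} (a : Fin n → ℤ) (ha : a ≠ 0) (b : ℤ) (v : Fin n → ℝ)
    (hv : IsVertex (knapsackHull a b) v)
    (S : Finset (Fin n)) (hS : S = Finset.univ.filter (fun i => v i ≠ 0)) :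
    (S.card : ℝ) ≤ Real.logb 2 (3.51 * Real.sqrt (∑ i ∈ S, ((a i : ℝ)) ^ 2)) :=
  stmt2_general a b v hv S hS
end

section
/- For every vertex v of the integer hull of a knapsack polytope with Δ = ‖a‖_∞, the support size satisfies |supp(v)| ≤ (3/2) · log₂(2.4 · Δ). -/
/-! A vertex of the integer hull is an integer point `z ≥ 0` of the knapsack. If two distinct
subsets `U, V` of its support had equal `a`-sums, then `z ± (𝟙_U - 𝟙_V)` would be two other
integer points of the knapsack with midpoint `z`. Hence the `2 ^ s` subsets of the support
(`s = |supp z|`) have pairwise distinct sums, all lying in an interval of length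
`∑ |aᵢ| ≤ s Δ`, so `2 ^ s ≤ s Δ + 1`, and this forces `4 ^ s ≤ (2.4 Δ) ^ 3`. -/

namespace IsVertex

variable {n : ℕ} {P : Set (Fin n → ℝ)} {v : Fin n → ℝ}

theorem mem_of_convexHull_s4 {S : Set (Fin n → ℝ)} (hv : IsVertex (convexHull ℝ S) v) : v ∈ S := by
  by_contra hvS
  have hsub : S ⊆ convexHull ℝ S \ {v} := fun x hx =>
    ⟨subset_convexHull ℝ S hx, fun h => hvS (h ▸ hx)⟩
  exact hv.2 (convexHull_mono hsub hv.1)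

theorem eq_of_midpoint_eq (hv : IsVertex P v) {x y : Fin n → ℝ} (hx : x ∈ P) (hy : y ∈ P)
    (hxy : midpoint ℝ x y = v) : x = v := by
  by_contra hxv
  have hyv : y ≠ v := by
    rintro rfl
    exact hxv ((midpoint_eq_right_iff ℝ).mp hxy)
  exact hv.2 <| segment_subset_convexHull (s := P \ {v}) ⟨hx, hxv⟩ ⟨hy, hyv⟩
    (hxy ▸ midpoint_mem_segment x y)

end IsVertex

section Knapsack

variable {n : ℕ} {a : Fin n → ℤ} {b : ℤ}

theorem mem_knapsackHull {w : Fin n → ℤ} (hw : ∀ i, 0 ≤ w i) (hwb : ∑ i, a i * w i = b) :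
    (fun i => (w i : ℝ)) ∈ knapsackHull a b :=
  subset_convexHull ℝ _ ⟨w, hw, hwb, rfl⟩

theorem eq_zero_of_isVertex_knapsackHull {z d : Fin n → ℤ}
    (hv : IsVertex (knapsackHull a b) (fun i => (z i : ℝ))) (hzb : ∑ i, a i * z i = b)
    (hd : ∑ i, a i * d i = 0) (hadd : ∀ i, 0 ≤ z i + d i) (hsub : ∀ i, 0 ≤ z i - d i) :
    d = 0 := by
  have hmid : midpoint ℝ (fun i => ((z + d) i : ℝ)) (fun i => ((z - d) i : ℝ)) =
      fun i => (z i : ℝ) := by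
    funext i
    simp only [midpoint_eq_smul_add, Pi.add_apply, Pi.sub_apply, Pi.smul_apply, Int.cast_add,
      Int.cast_sub, smul_eq_mul, invOf_eq_inv]
    ring
  have hxv := hv.eq_of_midpoint_eq
    (mem_knapsackHull hadd (by simp [mul_add, Finset.sum_add_distrib, hzb, hd]))
    (mem_knapsackHull hsub (by simp [mul_sub, Finset.sum_sub_distrib, hzb, hd])) hmid
  funext i
  simpa using congrFun hxv i

theorem injOn_subsetSum_of_isVertex_knapsackHull {z : Fin n → ℤ}
    (hv : IsVertex (knapsackHull a b) (fun i => (z i : ℝ))) (hz : ∀ i, 0 ≤ z i)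
    (hzb : ∑ i, a i * z i = b) :
    Set.InjOn (fun U => ∑ i ∈ U, a i) ↑(Finset.univ.filter (z · ≠ 0)).powerset := by
  intro U hU V hV hUV
  simp only [Finset.coe_powerset, Set.mem_preimage, Set.mem_powerset_iff, Finset.coe_subset,
    Finset.subset_iff, Finset.mem_filter, Finset.mem_univ, true_and] at hU hV
  let d : Fin n → ℤ := fun i => (if i ∈ U then 1 else 0) - (if i ∈ V then 1 else 0)
  have hd : ∑ i, a i * d i = 0 := by
    simpa [d, mul_sub, Finset.sum_sub_distrib, mul_ite, Finset.sum_ite_mem, sub_eq_zero] using hUV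
  have hbound : ∀ i, 0 ≤ z i + d i ∧ 0 ≤ z i - d i := by
    intro i
    rcases (hz i).eq_or_lt with hzero | hpos
    · have hiU : i ∉ U := fun h => hU h hzero.symm
      have hiV : i ∉ V := fun h => hV h hzero.symm
      simp [d, hiU, hiV, ← hzero]
    · simp only [d]
      split_ifs <;> omega
  have hd0 := eq_zero_of_isVertex_knapsackHull hv hzb hd (fun i => (hbound i).1)
    (fun i => (hbound i).2)
  ext i
  have hdi : d i = 0 := congrFun hd0 i
  by_cases hiU : i ∈ U <;> by_cases hiV : i ∈ V <;> simp [d, hiU, hiV] at hdi ⊢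

end Knapsack

theorem Finset.sum_mem_Icc_of_subset {ι α : Type*} [AddCommGroup α] [LinearOrder α]
    [IsOrderedAddMonoid α] {f : ι → α} {U T : Finset ι} (h : U ⊆ T) :
    ∑ i ∈ U, f i ∈ Set.Icc (∑ i ∈ T, min (f i) 0) (∑ i ∈ T, max (f i) 0) :=
  ⟨(Finset.sum_le_sum_of_subset_of_nonpos' h fun _ _ _ => min_le_right _ _).trans
      (Finset.sum_le_sum fun _ _ => min_le_left _ _),
    (Finset.sum_le_sum fun _ _ => le_max_left _ _).trans
      (Finset.sum_le_sum_of_subset_of_nonneg h fun _ _ _ => le_max_right _ _)⟩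

theorem two_pow_card_le_of_injOn_subsetSum {ι : Type*} {a : ι → ℤ} {T : Finset ι} {Δ : ℕ}
    (hΔ : ∀ i ∈ T, (a i).natAbs ≤ Δ) (hinj : Set.InjOn (fun U => ∑ i ∈ U, a i) ↑T.powerset) :
    2 ^ T.card ≤ T.card * Δ + 1 := by
  have hmaps : Set.MapsTo (fun U => ∑ i ∈ U, a i) T.powerset
      (Finset.Icc (∑ i ∈ T, min (a i) 0) (∑ i ∈ T, max (a i) 0)) := fun U hU => by
    simpa using Finset.sum_mem_Icc_of_subset (f := a) (Finset.mem_powerset.mp hU)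
  have hcard := Finset.card_le_card_of_injOn _ hmaps hinj
  rw [Finset.card_powerset, Int.card_Icc] at hcard
  have hwidth : ∑ i ∈ T, max (a i) 0 - ∑ i ∈ T, min (a i) 0 ≤ T.card * Δ := by
    rw [← Finset.sum_sub_distrib]
    calc ∑ i ∈ T, (max (a i) 0 - min (a i) 0) = ∑ i ∈ T, ((a i).natAbs : ℤ) := by
          simp [max_sub_min_eq_abs]
      _ ≤ ∑ _i ∈ T, (Δ : ℤ) := Finset.sum_le_sum fun i hi => by exact_mod_cast hΔ i hi
      _ = T.card * Δ := by simp
  omega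

theorem cube_mul_le_two_pow {s : ℕ} (hs : 9 ≤ s) : 125 * s ^ 3 ≤ 216 * 2 ^ s := by
  induction s, hs using Nat.le_induction with
  | base => norm_num
  | succ s hs ih =>
    have hcube : (s + 1) ^ 3 ≤ 2 * s ^ 3 := by nlinarith [Nat.mul_le_mul_right (s ^ 2) hs]
    calc 125 * (s + 1) ^ 3 ≤ 2 * (125 * s ^ 3) := by omega
      _ ≤ 216 * 2 ^ (s + 1) := by rw [pow_succ 2 s]; omega

theorem four_pow_mul_cube_le {s : ℕ} (hs : 1 ≤ s) :
    125 * 4 ^ s * s ^ 3 ≤ 1728 * (2 ^ s - 1) ^ 3 := by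
  rcases le_or_gt s 8 with hsmall | hlarge
  · interval_cases s <;> norm_num
  have htwo : 2 ≤ 2 ^ s := Nat.le_self_pow (by omega) 2
  have hhalf : (2 ^ s) ^ 3 ≤ 8 * (2 ^ s - 1) ^ 3 := by
    calc (2 ^ s) ^ 3 ≤ (2 * (2 ^ s - 1)) ^ 3 := Nat.pow_le_pow_left (by omega) 3
      _ = 8 * (2 ^ s - 1) ^ 3 := by ring
  calc 125 * 4 ^ s * s ^ 3 = 125 * s ^ 3 * (2 ^ s) ^ 2 := by
        rw [← pow_mul, mul_comm s 2, pow_mul]; ring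
    _ ≤ 216 * 2 ^ s * (2 ^ s) ^ 2 := Nat.mul_le_mul_right _ (cube_mul_le_two_pow hlarge)
    _ = 216 * (2 ^ s) ^ 3 := by ring
    _ ≤ 1728 * (2 ^ s - 1) ^ 3 := by omega

-- `1728 / 125 = 2.4 ^ 3`
theorem four_pow_le_of_two_pow_le {s Δ : ℕ} (hs : 1 ≤ s) (h : 2 ^ s ≤ s * Δ + 1) :
    125 * 4 ^ s ≤ 1728 * Δ ^ 3 := by
  have hcube : (2 ^ s - 1) ^ 3 ≤ (s * Δ) ^ 3 := Nat.pow_le_pow_left (by omega) 3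
  refine Nat.le_of_mul_le_mul_right ?_ (pow_pos hs 3)
  calc 125 * 4 ^ s * s ^ 3 ≤ 1728 * (2 ^ s - 1) ^ 3 := four_pow_mul_cube_le hs
    _ ≤ 1728 * (s * Δ) ^ 3 := Nat.mul_le_mul_left _ hcube
    _ = 1728 * Δ ^ 3 * s ^ 3 := by ring

theorem le_logb_of_two_pow_le {s Δ : ℕ} (h : 2 ^ s ≤ s * Δ + 1) :
    (s : ℝ) ≤ 3 / 2 * Real.logb 2 (2.4 * Δ) := by
  rcases Nat.eq_zero_or_pos s with rfl | hs
  · rcases Nat.eq_zero_or_pos Δ with rfl | hΔ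
    · simp
    · have hΔ' : (1 : ℝ) ≤ Δ := by exact_mod_cast hΔ
      simpa using Real.logb_nonneg one_lt_two (by linarith : (1 : ℝ) ≤ 2.4 * Δ)
  have hpow : (4 : ℝ) ^ s ≤ (2.4 * Δ) ^ 3 := by
    have hnat : (125 : ℝ) * 4 ^ s ≤ 1728 * Δ ^ 3 := by
      exact_mod_cast four_pow_le_of_two_pow_le hs h
    rw [mul_pow]
    linarith
  have hlog := Real.logb_le_logb_of_le one_lt_two (by positivity) hpow
  rw [Real.logb_pow, Real.logb_pow, show (4 : ℝ) = 2 ^ 2 by norm_num, Real.logb_pow,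
    Real.logb_self_eq_one one_lt_two] at hlog
  linarith

theorem stmt4_general {n : ℕ} (a : Fin n → ℤ) (b : ℤ) (v : Fin n → ℝ)
    (hv : IsVertex (knapsackHull a b) v)
    (Δ : ℕ) (hΔ : Δ = Finset.univ.sup fun i => (a i).natAbs) :
    ((Function.support v).ncard : ℝ) ≤ (3 / 2) * Real.logb 2 (2.4 * Δ) := by
  obtain ⟨z, hz, hzb, rfl⟩ := hv.mem_of_convexHull_s4
  have hsupp : (Function.support fun i => (z i : ℝ)) = ↑(Finset.univ.filter (z · ≠ 0)) := by
    ext i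
    simp
  have hΔle : ∀ i ∈ Finset.univ.filter (z · ≠ 0), (a i).natAbs ≤ Δ := fun i _ =>
    hΔ ▸ Finset.le_sup (f := fun i => (a i).natAbs) (Finset.mem_univ i)
  rw [hsupp, Set.ncard_coe_finset]
  exact le_logb_of_two_pow_le <|
    two_pow_card_le_of_injOn_subsetSum hΔle (injOn_subsetSum_of_isVertex_knapsackHull hv hz hzb)

theorem stmt4 {n : ℕ} (a : Fin n → ℤ) (ha : a ≠ 0) (b : ℤ) (v : Fin n → ℝ)
    (hv : IsVertex (knapsackHull a b) v)
    (Δ : ℕ) (hΔ : Δ = Finset.univ.sup fun i => (a i).natAbs) :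
    ((Function.support v).ncard : ℝ) ≤ (3 / 2) * Real.logb 2 (2.4 * Δ) :=
  stmt4_general a b v hv Δ hΔ
end

section
/- For every d ≥ 1 there exists a knapsack polytope whose integer hull has a vertex v with |supp(v)| = log₂(Δ) + 1, where Δ = ‖a‖_∞. Concretely, for a = (2^0, 2^1, ..., 2^{d-1}) and b = 2^d − 1, the all-ones vector is a vertex of Conv({x ∈ ℤ^d_{≥0} : aᵀx = b}) and has support of size d = log₂(Δ) + 1. -/
/-!
Among the nonnegative integer solutions of `∑ 2^i z_i = 2^d - 1`, the all-ones vector is the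
unique one with smallest coordinate sum: `z_0` is odd, say `2t + 1`, and carrying `t` pairs of
ones into the next position gives a solution in one dimension less whose sum is smaller by
`t + 1`. Hence the integer hull lies in the convex set `{1} ∪ {x | ∑ x_i > d}`, and removing the
all-ones vector leaves a subset of an open half-space that does not contain it.
-/

open Finset

theorem eq_one_or_lt_sum_of_sum_two_pow_mul_add_one_eq {n : ℕ} (z : Fin (n + 1) → ℕ)
    (h : ∑ i : Fin (n + 1), 2 ^ (i : ℕ) * z i + 1 = 2 ^ (n + 1)) : z = 1 ∨ n + 1 < ∑ i, z i := by
  induction n with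
  | zero =>
    left
    ext i
    rw [Fin.fin_one_eq_zero i]
    simpa using h
  | succ n ih =>
    set S := ∑ j : Fin (n + 1), 2 ^ (j : ℕ) * z j.succ
    have hsplit : z 0 + 2 * S + 1 = 2 * 2 ^ (n + 1) := by
      rw [← pow_succ', ← h, Fin.sum_univ_succ, mul_sum]
      simp only [Fin.val_zero, pow_zero, one_mul, Fin.val_succ, pow_succ, mul_comm, mul_left_comm]
    obtain ⟨t, hz0⟩ : ∃ t, z 0 = 2 * t + 1 := ⟨z 0 / 2, by omega⟩
    -- carry `t` pairs of ones from position `0` into position `1`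
    set w : Fin (n + 1) → ℕ := Fin.tail z + Pi.single 0 t
    have hw : ∑ j : Fin (n + 1), 2 ^ (j : ℕ) * w j + 1 = 2 ^ (n + 1) := by
      simp only [w, Pi.add_apply, Fin.tail, Pi.single_apply, mul_add, mul_ite, mul_zero,
        sum_add_distrib, sum_ite_eq', mem_univ, if_true, Fin.val_zero, pow_zero, one_mul]
      omega
    have hsum_w : ∑ j, w j = ∑ j : Fin (n + 1), z j.succ + t := by
      simp only [w, Pi.add_apply, Fin.tail, sum_add_distrib, sum_pi_single', mem_univ, if_true]
    rw [Fin.sum_univ_succ]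
    rcases ih w hw with hw1 | hlt
    · rcases Nat.eq_zero_or_pos t with rfl | ht
      · left
        ext i
        refine Fin.cases (by simpa using hz0) (fun j => ?_) i
        simpa [w, Fin.tail] using congr_fun hw1 j
      · right
        simp only [hw1, Pi.one_apply, sum_const, card_univ, Fintype.card_fin, smul_eq_mul,
          mul_one] at hsum_w
        omega
    · right
      omega

theorem lt_sum_of_sum_two_pow_mul_eq {n : ℕ} (z : Fin (n + 1) → ℤ) (hz : ∀ i, 0 ≤ z i)
    (h : ∑ i : Fin (n + 1), 2 ^ (i : ℕ) * z i = 2 ^ (n + 1) - 1) (hne : z ≠ 1) :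
    (n + 1 : ℤ) < ∑ i, z i := by
  lift z to Fin (n + 1) → ℕ using hz
  have hnat : ∑ i : Fin (n + 1), 2 ^ (i : ℕ) * z i + 1 = 2 ^ (n + 1) := by
    zify
    linarith
  rcases eq_one_or_lt_sum_of_sum_two_pow_mul_add_one_eq z hnat with rfl | hlt
  · exact absurd (funext fun _ => Nat.cast_one) hne
  · push_cast
    exact_mod_cast hlt

theorem convex_insert_setOf_lt {E : Type*} [AddCommGroup E] [Module ℝ E] (l : E →ₗ[ℝ] ℝ)
    (v : E) : Convex ℝ (insert v {y | l v < l y}) := by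
  refine convex_iff_pairwise_pos.2 fun x hx y hy hxy a b ha hb hab => Or.inr ?_
  have hle : ∀ z ∈ insert v {y | l v < l y}, l v ≤ l z := by
    rintro z (rfl | hz)
    exacts [le_rfl, le_of_lt hz]
  have hlt : l v < l x ∨ l v < l y := by
    rcases hx with rfl | hx
    · rcases hy with rfl | hy
      exacts [absurd rfl hxy, Or.inr hy]
    · exact Or.inl hx
  obtain rfl : b = 1 - a := by linarith
  show l v < l (a • x + (1 - a) • y)
  rw [map_add, map_smul, map_smul, smul_eq_mul, smul_eq_mul]
  rcases hlt with h | h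
  · linarith [mul_pos ha (sub_pos.2 h), mul_nonneg hb.le (sub_nonneg.2 (hle y hy))]
  · linarith [mul_nonneg ha.le (sub_nonneg.2 (hle x hx)), mul_pos hb (sub_pos.2 h)]

theorem isVertex_convexHull_of_lt {n : ℕ} {s : Set (Fin n → ℝ)} {v : Fin n → ℝ}
    (l : (Fin n → ℝ) →ₗ[ℝ] ℝ) (hv : v ∈ s) (hlt : ∀ y ∈ s, y ≠ v → l v < l y) :
    IsVertex (convexHull ℝ s) v := by
  refine ⟨subset_convexHull ℝ s hv, fun hmem => lt_irrefl (l v) ?_⟩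
  have hhull : convexHull ℝ s ⊆ insert v {y | l v < l y} :=
    convexHull_min (fun y hy => (eq_or_ne y v).imp id (hlt y hy)) (convex_insert_setOf_lt l v)
  have hrest : convexHull ℝ (convexHull ℝ s \ {v}) ⊆ {y | l v < l y} :=
    convexHull_min (fun y hy => (hhull hy.1).resolve_left hy.2) (convex_halfSpace_gt l.isLinear _)
  exact hrest hmem

/-- For `a = (2^0, …, 2^{d-1})` and `b = 2^d - 1`, the all-ones vector is a vertex of
the integer hull of the knapsack polytope, its support has size `d`, and
`d = log₂(Δ) + 1` for `Δ = 2^{d-1}` the largest entry of `a`. -/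
theorem stmt5 (d : ℕ) (hd : 1 ≤ d) :
    IsVertex (knapsackHull (fun i : Fin d => 2 ^ (i : ℕ)) (2 ^ d - 1)) (fun _ => 1) ∧
    (Function.support (fun _ : Fin d => (1 : ℝ))).ncard = d ∧
    (d : ℝ) = Real.logb 2 ((2 : ℝ) ^ (d - 1)) + 1 := by
  obtain ⟨n, rfl⟩ := Nat.exists_eq_add_of_le' hd
  refine ⟨isVertex_convexHull_of_lt (∑ i, LinearMap.proj i)
    ⟨1, fun _ => zero_le_one, ?_, ?_⟩ ?_, ?_, ?_⟩
  · simpa [Fin.sum_univ_eq_sum_range] using geom_sum_mul (2 : ℤ) (n + 1)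
  · simp
  · rintro y ⟨z, hz, h, rfl⟩ hne
    have hlt : ((n + 1 : ℤ) : ℝ) < ((∑ i, z i : ℤ) : ℝ) :=
      Int.cast_lt.2 (lt_sum_of_sum_two_pow_mul_eq z hz h (by rintro rfl; exact hne (by simp)))
    simpa using hlt
  · simp [Function.support_const]
  · rw [Real.logb_pow, Real.logb_self_eq_one one_lt_two]
    push_cast
    ring
end

section
/- Let Y₁,...,Y_n be independent random variables taking values in ℝ^m with ℓ_i[j] ≤ Y_i[j] ≤ u_i[j] almost surely for all i,j, let Y = Σ_i Y_i and μ = E[Y]. Then for every δ > 0, Pr[‖Y − μ‖₁ ≥ 1.12·Σ_{j=1}^m sqrt(Σ_{i=1}^n (u_i[j] − ℓ_i[j])²) + δ] ≤ 2·exp(−2δ² / Σ_{i=1}^n (Σ_{j=1}^m (u_i[j] − ℓ_i[j]))²). -/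
/-!
Coordinatewise, `Var (∑ i, Y i · j) ≤ ∑ i, ((u i j - l i j) / 2) ^ 2` by independence and
Popoviciu's inequality, so Jensen bounds `E ‖Y - μ‖₁` by `∑ j, √(∑ i, ((u i j - l i j) / 2) ^ 2)`,
which is below the `1.12`-term. Changing `Y i` alone moves `‖Y - μ‖₁` by at most
`c i = ∑ j, (u i j - l i j)`, so McDiarmid's inequality gives the sub-Gaussian tail
`exp (-2 δ ^ 2 / ∑ i, c i ^ 2)` above the mean. McDiarmid's inequality is proved by
integrating out one coordinate at a time: conditionally on the remaining coordinates, the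
increment is a bounded centred variable to which Hoeffding's lemma applies.
-/

open MeasureTheory ProbabilityTheory Real
open scoped NNReal

lemma exists_mem_Icc_add_of_sub_le {α : Type*} [Nonempty α] {f : α → ℝ} {c : ℝ}
    (hf : ∀ v w, f v - f w ≤ c) : ∃ a, ∀ v, f v ∈ Set.Icc a (a + c) := by
  obtain ⟨w₀⟩ := ‹Nonempty α›
  have hbdd : BddBelow (Set.range f) := ⟨f w₀ - c, by rintro _ ⟨w, rfl⟩; linarith [hf w₀ w]⟩
  refine ⟨⨅ w, f w, fun v => ⟨ciInf_le hbdd v, ?_⟩⟩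
  have : f v - c ≤ ⨅ w, f w := le_ciInf fun w => by linarith [hf v w]
  linarith

namespace ProbabilityTheory

variable {α β : Type*} [MeasurableSpace α] [MeasurableSpace β]
  {ν : Measure α} {ρ : Measure β} [IsProbabilityMeasure ν] [IsProbabilityMeasure ρ]

lemma integrable_of_sub_le {f : α → ℝ} (hf : Measurable f) {c : ℝ} (hc : ∀ v w, f v - f w ≤ c) :
    Integrable f ν := by
  have : Nonempty α := nonempty_of_isProbabilityMeasure ν
  obtain ⟨a, ha⟩ := exists_mem_Icc_add_of_sub_le hc
  exact .of_mem_Icc a (a + c) hf.aemeasurable (ae_of_all _ ha)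

lemma integral_sub_integral_le {f g : α → ℝ} (hf : Integrable f ν) (hg : Integrable g ν) {c : ℝ}
    (hfg : ∀ v, f v - g v ≤ c) : ∫ v, f v ∂ν - ∫ v, g v ∂ν ≤ c := by
  rw [← integral_sub hf hg]
  simpa using integral_mono (hf.sub hg) (integrable_const c) hfg

lemma abs_sub_integral_le_of_sub_le {f : α → ℝ} (hf : Measurable f) {c : ℝ}
    (hc : ∀ v w, f v - f w ≤ c) (v : α) : |f v - ∫ w, f w ∂ν| ≤ c := by
  have : Nonempty α := nonempty_of_isProbabilityMeasure ν
  obtain ⟨a, ha⟩ := exists_mem_Icc_add_of_sub_le hc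
  have hint : Integrable f ν := integrable_of_sub_le hf hc
  have hlow : a ≤ ∫ w, f w ∂ν := by
    simpa using integral_mono (integrable_const a) hint fun w => (ha w).1
  have hupp : ∫ w, f w ∂ν ≤ a + c := by
    simpa using integral_mono hint (integrable_const (a + c)) fun w => (ha w).2
  rw [abs_le]
  constructor <;> linarith [(ha v).1, (ha v).2]

lemma hasSubgaussianMGF_sub_integral_of_sub_le {f : α → ℝ} (hf : Measurable f) {c : ℝ≥0}
    (hc : ∀ v w, f v - f w ≤ c) :
    HasSubgaussianMGF (fun v => f v - ∫ w, f w ∂ν) ((c / 2) ^ 2) ν := by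
  have : Nonempty α := nonempty_of_isProbabilityMeasure ν
  obtain ⟨a, ha⟩ := exists_mem_Icc_add_of_sub_le hc
  simpa using hasSubgaussianMGF_of_mem_Icc hf.aemeasurable (ae_of_all _ ha)

lemma HasSubgaussianMGF.prod_of_sub_le {G : α × β → ℝ} (hG : Measurable G) {c d : ℝ≥0}
    (hc : ∀ v w y, G (v, y) - G (w, y) ≤ c)
    (hd : HasSubgaussianMGF (fun y => ∫ v, G (v, y) ∂ν - ∫ y, ∫ v, G (v, y) ∂ν ∂ρ) d ρ) :
    HasSubgaussianMGF (fun q => G q - ∫ q, G q ∂(ν.prod ρ)) ((c / 2) ^ 2 + d) (ν.prod ρ) := by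
  set h : β → ℝ := fun y => ∫ v, G (v, y) ∂ν
  set E := ∫ y, h y ∂ρ
  have hGy : ∀ y, Measurable fun v => G (v, y) := fun y => hG.comp measurable_prodMk_right
  have hclose : ∀ q, |G q - h q.2| ≤ c := fun q =>
    abs_sub_integral_le_of_sub_le (hGy q.2) (fun v w => hc v w q.2) q.1
  have hhint : Integrable h ρ :=
    (hd.integrable.add (integrable_const E)).congr (ae_of_all _ fun y => sub_add_cancel _ _)
  have hGint : Integrable G (ν.prod ρ) := by
    refine ((hhint.comp_snd ν).abs.add (integrable_const (c : ℝ))).mono'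
      hG.aestronglyMeasurable (ae_of_all _ fun q => ?_)
    change |G q| ≤ |h q.2| + c
    linarith [abs_sub_abs_le_abs_sub (G q) (h q.2), hclose q]
  rw [show ∫ q, G q ∂(ν.prod ρ) = E from integral_prod_symm G hGint]
  have hsplit : ∀ t q, exp (t * (G q - E)) = exp (t * (h q.2 - E)) * exp (t * (G q - h q.2)) :=
    fun t q => by rw [← exp_add]; ring_nf
  have hexp_int : ∀ t, Integrable (fun q => exp (t * (G q - E))) (ν.prod ρ) := fun t => by
    refine (((hd.integrable_exp_mul t).comp_snd ν).mul_const (exp (|t| * c))).mono'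
      (by fun_prop) (ae_of_all _ fun q => ?_)
    rw [Real.norm_of_nonneg (exp_pos _).le, hsplit]
    refine mul_le_mul_of_nonneg_left (exp_le_exp.mpr ((le_abs_self _).trans ?_)) (exp_pos _).le
    rw [abs_mul]
    exact mul_le_mul_of_nonneg_left (hclose q) (abs_nonneg t)
  refine ⟨hexp_int, fun t => ?_⟩
  calc mgf (fun q => G q - E) (ν.prod ρ) t
      = ∫ y, exp (t * (h y - E)) * mgf (fun v => G (v, y) - h y) ν t ∂ρ := by
        unfold mgf
        rw [integral_prod_symm _ (hexp_int t)]
        refine integral_congr_ae (ae_of_all _ fun y => ?_)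
        change ∫ v, exp (t * (G (v, y) - E)) ∂ν
          = exp (t * (h y - E)) * ∫ v, exp (t * (G (v, y) - h y)) ∂ν
        rw [← integral_const_mul]
        exact integral_congr_ae (ae_of_all _ fun v => hsplit t (v, y))
    _ ≤ ∫ y, exp (t * (h y - E)) * exp ((c / 2) ^ 2 * t ^ 2 / 2) ∂ρ := by
        refine integral_mono_of_nonneg (ae_of_all _ fun y => mul_nonneg (exp_pos _).le mgf_nonneg)
          ((hd.integrable_exp_mul t).mul_const _) (ae_of_all _ fun y => ?_)
        exact mul_le_mul_of_nonneg_left (by exact_mod_cast (hasSubgaussianMGF_sub_integral_of_sub_le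
          (hGy y) fun v w => hc v w y).mgf_le t) (exp_pos _).le
    _ = mgf (fun y => h y - E) ρ t * exp ((c / 2) ^ 2 * t ^ 2 / 2) := integral_mul_const _ _
    _ ≤ exp (d * t ^ 2 / 2) * exp ((c / 2) ^ 2 * t ^ 2 / 2) := by
        gcongr
        exact hd.mgf_le t
    _ = exp ((((c / 2) ^ 2 + d : ℝ≥0) : ℝ) * t ^ 2 / 2) := by
        rw [← exp_add]; push_cast; ring_nf

theorem hasSubgaussianMGF_pi_of_update_sub_le {n : ℕ} (ν : Fin n → Measure α)
    [∀ i, IsProbabilityMeasure (ν i)] {F : (Fin n → α) → ℝ} (hF : Measurable F) (c : Fin n → ℝ≥0)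
    (hc : ∀ i x v, F (Function.update x i v) - F x ≤ c i) :
    HasSubgaussianMGF (fun x => F x - ∫ x, F x ∂Measure.pi ν) (∑ i, (c i / 2) ^ 2)
      (Measure.pi ν) := by
  induction n with
  | zero =>
    refine HasSubgaussianMGF.fun_zero.congr (ae_of_all _ fun x => ?_)
    simp [integral_unique, Subsingleton.elim x default]
  | succ n ih =>
    set e := MeasurableEquiv.piFinSuccAbove (fun _ : Fin (n + 1) => α) 0
    set G : α × (Fin n → α) → ℝ := fun q => F (Fin.cons q.1 q.2)
    have hmp : MeasurePreserving e (Measure.pi ν) ((ν 0).prod (Measure.pi fun j => ν j.succ)) :=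
      measurePreserving_piFinSuccAbove ν 0
    have hFG : F = G ∘ e := funext fun x => by
      simp [G, e, MeasurableEquiv.piFinSuccAbove_apply, Fin.cons_self_tail]
    have hG : Measurable G := by
      have := hF.comp e.symm.measurable
      convert this using 1
      funext q
      simp [G, e, Fin.consEquiv]
    have hc0 : ∀ v w y, G (v, y) - G (w, y) ≤ c 0 := fun v w y => by
      simpa [G, Fin.update_cons_zero] using hc 0 (Fin.cons w y) v
    have hGint : ∀ y, Integrable (fun v => G (v, y)) (ν 0) := fun y =>
      integrable_of_sub_le (hG.comp measurable_prodMk_right) (hc0 · · y)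
    have hcsucc : ∀ i y w, ∫ v, G (v, Function.update y i w) ∂ν 0 - ∫ v, G (v, y) ∂ν 0
        ≤ c i.succ := fun i y w =>
      integral_sub_integral_le (hGint _) (hGint _) fun v => by
        simpa [G, Fin.cons_update] using hc i.succ (Fin.cons v y) w
    have hstep := HasSubgaussianMGF.prod_of_sub_le hG hc0
      (ih (fun j => ν j.succ) (hG.stronglyMeasurable.integral_prod_left'.measurable)
        (fun j => c j.succ) hcsucc)
    have hint : ∫ x, F x ∂Measure.pi ν = ∫ q, G q ∂(ν 0).prod (Measure.pi fun j => ν j.succ) := by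
      rw [hFG]; exact hmp.integral_comp' G
    rw [Fin.sum_univ_succ, hint, hFG]
    refine HasSubgaussianMGF.of_map (X := fun q => G q - ∫ q, G q ∂(ν 0).prod _)
      hmp.measurable.aemeasurable ?_
    rwa [hmp.map_eq]

theorem iIndepFun.hasSubgaussianMGF_of_update_sub_le {Ω : Type*} [MeasurableSpace Ω]
    {μ : Measure Ω} {n : ℕ} {X : Fin n → Ω → α} (hX : ∀ i, Measurable (X i))
    (hindep : iIndepFun X μ) {F : (Fin n → α) → ℝ} (hF : Measurable F) (c : Fin n → ℝ≥0)
    (hc : ∀ i x v, F (Function.update x i v) - F x ≤ c i) :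
    HasSubgaussianMGF (fun ω => F (fun i => X i ω) - ∫ ω, F (fun i => X i ω) ∂μ)
      (∑ i, (c i / 2) ^ 2) μ := by
  have := hindep.isProbabilityMeasure
  have hT : Measurable fun ω i => X i ω := measurable_pi_lambda _ hX
  have (i : Fin n) : IsProbabilityMeasure (μ.map (X i)) :=
    Measure.isProbabilityMeasure_map (hX i).aemeasurable
  have h := hasSubgaussianMGF_pi_of_update_sub_le (fun i => μ.map (X i)) hF c hc
  rw [← hindep.map_fun_eq_pi_map fun i => (hX i).aemeasurable,
    integral_map hT.aemeasurable hF.aestronglyMeasurable] at h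
  exact h.of_map hT.aemeasurable

section Clamp

variable {ι κ : Type*} [Fintype ι] [Fintype κ]

-- Clamping makes the bounded-difference property hold everywhere, not only almost surely.
def clampedDeviation (l u : ι → κ → ℝ) (M : κ → ℝ) (x : ι → κ → ℝ) : ℝ :=
  ∑ j, |∑ i, max (l i j) (min (u i j) (x i j)) - M j|

lemma measurable_clampedDeviation (l u : ι → κ → ℝ) (M : κ → ℝ) :
    Measurable (clampedDeviation l u M) := by
  unfold clampedDeviation
  fun_prop

lemma clampedDeviation_eq {l u : ι → κ → ℝ} (M : κ → ℝ) {x : ι → κ → ℝ}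
    (hx : ∀ i j, x i j ∈ Set.Icc (l i j) (u i j)) :
    clampedDeviation l u M x = ∑ j, |∑ i, x i j - M j| := by
  simp only [clampedDeviation, min_eq_right (hx _ _).2, max_eq_right (hx _ _).1]

lemma clampedDeviation_update_sub_le [DecidableEq ι] {l u : ι → κ → ℝ}
    (hlu : ∀ i j, l i j ≤ u i j) (M : κ → ℝ) (x : ι → κ → ℝ) (i : ι) (v : κ → ℝ) :
    clampedDeviation l u M (Function.update x i v) - clampedDeviation l u M x
      ≤ ∑ j, (u i j - l i j) := by
  rw [clampedDeviation, clampedDeviation, ← Finset.sum_sub_distrib]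
  refine Finset.sum_le_sum fun j _ => (abs_sub_abs_le_abs_sub _ _).trans ?_
  rw [sub_sub_sub_cancel_right, ← Finset.sum_sub_distrib,
    Finset.sum_eq_single i (fun k _ hk => by simp [hk]) (by simp)]
  simp only [Function.update_self]
  have hclamp : ∀ s, max (l i j) (min (u i j) s) ∈ Set.Icc (l i j) (u i j) := fun s =>
    ⟨le_max_left _ _, max_le (hlu i j) (min_le_left _ _)⟩
  obtain ⟨h₁, h₂⟩ := hclamp (v j)
  obtain ⟨h₃, h₄⟩ := hclamp (x i j)
  exact abs_sub_le_iff.2 ⟨by linarith, by linarith⟩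

end Clamp

section Deviation

variable {Ω : Type*} [MeasurableSpace Ω] {μ : Measure Ω} [IsProbabilityMeasure μ]

lemma integral_abs_sub_integral_le_sqrt_variance {X : Ω → ℝ} (hX : MemLp X 2 μ) :
    ∫ ω, |X ω - μ[X]| ∂μ ≤ √(Var[X; μ]) := by
  have hY : MemLp (fun ω => |X ω - μ[X]|) 2 μ := (hX.sub (memLp_const _)).abs
  have hvar := variance_nonneg (fun ω => |X ω - μ[X]|) μ
  rw [variance_eq_sub hY] at hvar
  refine Real.le_sqrt_of_sq_le ?_
  rw [variance_eq_integral hX.aemeasurable]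
  simpa [sq_abs] using hvar

lemma iIndepFun.variance_sum_le {ι : Type*} [Fintype ι] {X : ι → Ω → ℝ}
    (hX : ∀ i, Measurable (X i)) (hindep : iIndepFun X μ) {a b : ι → ℝ}
    (hab : ∀ i, ∀ᵐ ω ∂μ, X i ω ∈ Set.Icc (a i) (b i)) :
    Var[fun ω => ∑ i, X i ω; μ] ≤ ∑ i, ((b i - a i) / 2) ^ 2 := by
  have hL2 : ∀ i, MemLp (X i) 2 μ := fun i => memLp_of_bounded (hab i) (hX i).aestronglyMeasurable 2
  have := IndepFun.variance_sum (s := Finset.univ) (fun i _ => hL2 i)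
    fun i _ j _ hij => hindep.indepFun hij
  simp only [Finset.sum_fn] at this
  rw [this]
  exact Finset.sum_le_sum fun i _ => variance_le_sq_of_bounded (hab i) (hX i).aemeasurable

theorem iIndepFun.integral_sum_abs_sub_integral_le {ι κ : Type*} [Fintype ι] [Fintype κ]
    {Y : ι → Ω → κ → ℝ} (hY : ∀ i, Measurable (Y i)) (hindep : iIndepFun Y μ)
    {l u : ι → κ → ℝ} (hbound : ∀ i j, ∀ᵐ ω ∂μ, Y i ω j ∈ Set.Icc (l i j) (u i j)) :
    ∫ ω, ∑ j, |∑ i, Y i ω j - ∫ ω', ∑ i, Y i ω' j ∂μ| ∂μ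
      ≤ ∑ j, √(∑ i, ((u i j - l i j) / 2) ^ 2) := by
  have hcoord : ∀ i j, Measurable fun ω => Y i ω j := fun i j => (measurable_pi_apply j).comp (hY i)
  have hL2 : ∀ j, MemLp (fun ω => ∑ i, Y i ω j) 2 μ := fun j =>
    memLp_finsetSum _ fun i _ =>
      memLp_of_bounded (hbound i j) (hcoord i j).aestronglyMeasurable 2
  have hint : ∀ j, Integrable (fun ω => |∑ i, Y i ω j - ∫ ω', ∑ i, Y i ω' j ∂μ|) μ := fun j =>
    (((hL2 j).integrable one_le_two).sub (integrable_const _)).abs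
  rw [integral_finsetSum _ fun j _ => hint j]
  refine Finset.sum_le_sum fun j _ => (integral_abs_sub_integral_le_sqrt_variance (hL2 j)).trans ?_
  exact Real.sqrt_le_sqrt <| iIndepFun.variance_sum_le (hcoord · j)
    (hindep.comp (fun _ x => x j) fun _ => measurable_pi_apply j) (hbound · j)

theorem iIndepFun.measureReal_sum_abs_sub_integral_ge_le {n : ℕ} {κ : Type*} [Fintype κ]
    {Y : Fin n → Ω → κ → ℝ} (hY : ∀ i, Measurable (Y i)) (hindep : iIndepFun Y μ)
    {l u : Fin n → κ → ℝ} (hbound : ∀ i j, ∀ᵐ ω ∂μ, Y i ω j ∈ Set.Icc (l i j) (u i j))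
    {δ : ℝ} (hδ : 0 ≤ δ) :
    μ.real {ω | ∑ j, √(∑ i, ((u i j - l i j) / 2) ^ 2) + δ ≤
        ∑ j, |∑ i, Y i ω j - ∫ ω', ∑ i, Y i ω' j ∂μ|} ≤
      exp (-(2 * δ ^ 2) / ∑ i, (∑ j, (u i j - l i j)) ^ 2) := by
  classical
  set M : κ → ℝ := fun j => ∫ ω', ∑ i, Y i ω' j ∂μ
  set D := fun ω => clampedDeviation l u M (fun i => Y i ω)
  have hae : ∀ᵐ ω ∂μ, ∀ i j, Y i ω j ∈ Set.Icc (l i j) (u i j) :=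
    ae_all_iff.2 fun i => ae_all_iff.2 (hbound i)
  have hlu : ∀ i j, l i j ≤ u i j := by
    obtain ⟨ω, hω⟩ := hae.exists
    exact fun i j => (hω i j).1.trans (hω i j).2
  have hD : (fun ω => ∑ j, |∑ i, Y i ω j - M j|) =ᵐ[μ] D := by
    filter_upwards [hae] with ω hω using (clampedDeviation_eq M hω).symm
  have hmean : ∫ ω, D ω ∂μ ≤ ∑ j, √(∑ i, ((u i j - l i j) / 2) ^ 2) := by
    rw [← integral_congr_ae hD]
    exact hindep.integral_sum_abs_sub_integral_le hY hbound
  set c : Fin n → ℝ≥0 := fun i => (∑ j, (u i j - l i j)).toNNReal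
  have hc : ∀ i, (c i : ℝ) = ∑ j, (u i j - l i j) := fun i =>
    Real.coe_toNNReal _ (Finset.sum_nonneg fun j _ => sub_nonneg.2 (hlu i j))
  have hsubG := hindep.hasSubgaussianMGF_of_update_sub_le hY
    (measurable_clampedDeviation l u M) c fun i x v => by
      simpa only [hc] using clampedDeviation_update_sub_le hlu M x i v
  have hparam : -δ ^ 2 / (2 * ((∑ i, (c i / 2) ^ 2 : ℝ≥0) : ℝ))
      = -(2 * δ ^ 2) / ∑ i, (∑ j, (u i j - l i j)) ^ 2 := by
    push_cast [hc]
    simp_rw [div_pow, ← Finset.sum_div]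
    ring
  calc μ.real {ω | ∑ j, √(∑ i, ((u i j - l i j) / 2) ^ 2) + δ ≤ ∑ j, |∑ i, Y i ω j - M j|}
      = μ.real {ω | ∑ j, √(∑ i, ((u i j - l i j) / 2) ^ 2) + δ ≤ D ω} :=
        measureReal_congr <| hD.mono fun ω h => congrArg (_ ≤ ·) h
    _ ≤ μ.real {ω | δ ≤ D ω - ∫ ω, D ω ∂μ} :=
        measureReal_mono fun ω (hω : _ ≤ D ω) => show δ ≤ D ω - _ by linarith
    _ ≤ _ := hparam ▸ hsubG.measure_ge_le hδ

end Deviation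

end ProbabilityTheory

/-- A Hoeffding-type concentration inequality for sums of independent bounded
vector-valued random variables, with respect to the ℓ₁-norm. -/
theorem stmt9 {Ω : Type*} [MeasurableSpace Ω] (μ : Measure Ω) [IsProbabilityMeasure μ]
    (n m : ℕ) (Y : Fin n → Ω → (Fin m → ℝ)) (l u : Fin n → Fin m → ℝ)
    (hmeas : ∀ i, Measurable (Y i))
    (hindep : iIndepFun Y μ)
    (hbound : ∀ i j, ∀ᵐ ω ∂μ, l i j ≤ Y i ω j ∧ Y i ω j ≤ u i j)
    (δ : ℝ) (hδ : 0 < δ) :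
    μ {ω | 1.12 * (∑ j, Real.sqrt (∑ i, (u i j - l i j) ^ 2)) + δ ≤
          ∑ j, |(∑ i, Y i ω j) - ∫ ω', ∑ i, Y i ω' j ∂μ|} ≤
      ENNReal.ofReal
        (2 * Real.exp (-(2 * δ ^ 2) / ∑ i, (∑ j, (u i j - l i j)) ^ 2)) := by
  have hscale : ∑ j, √(∑ i, ((u i j - l i j) / 2) ^ 2)
      ≤ 1.12 * ∑ j, √(∑ i, (u i j - l i j) ^ 2) := by
    have hsqrt : ∑ j, √(∑ i, ((u i j - l i j) / 2) ^ 2) ≤ ∑ j, √(∑ i, (u i j - l i j) ^ 2) :=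
      Finset.sum_le_sum fun j _ => Real.sqrt_le_sqrt <| Finset.sum_le_sum fun i _ => by
        nlinarith [sq_nonneg (u i j - l i j)]
    have : 0 ≤ ∑ j, √(∑ i, (u i j - l i j) ^ 2) := Finset.sum_nonneg fun j _ => sqrt_nonneg _
    linarith
  calc μ {ω | 1.12 * ∑ j, √(∑ i, (u i j - l i j) ^ 2) + δ ≤
        ∑ j, |∑ i, Y i ω j - ∫ ω', ∑ i, Y i ω' j ∂μ|}
      ≤ μ {ω | ∑ j, √(∑ i, ((u i j - l i j) / 2) ^ 2) + δ ≤
        ∑ j, |∑ i, Y i ω j - ∫ ω', ∑ i, Y i ω' j ∂μ|} :=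
        measure_mono <| Set.ofPred_subset_ofPred.2 fun ω hω => le_trans (by linarith) hω
    _ = ENNReal.ofReal (μ.real {ω | ∑ j, √(∑ i, ((u i j - l i j) / 2) ^ 2) + δ ≤
        ∑ j, |∑ i, Y i ω j - ∫ ω', ∑ i, Y i ω' j ∂μ|}) :=
        (ofReal_measureReal (measure_ne_top _ _)).symm
    _ ≤ _ := ENNReal.ofReal_le_ofReal <|
        (hindep.measureReal_sum_abs_sub_integral_ge_le hmeas hbound hδ.le).trans <|
          le_mul_of_one_le_left (exp_pos _).le one_le_two
end

section
/- For every m, d ≥ 1 there exists an integer matrix A ∈ ℤ^{m×md} with largest absolute entry Δ = 2^{d-1} and a right-hand side b such that the integer hull of {x ≥ 0 : Ax = b} has a vertex v with |supp(v)| = m·log₂(Δ) + m. Concretely, A is the block-diagonal matrix with m copies of the row (2^0, ..., 2^{d-1}) and b = (2^d − 1, ..., 2^d − 1); then the all-ones vector is a vertex of the integer hull with support md. -/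
open Matrix

/-!
In each of the `m` blocks, a nonnegative integer solution writes `2^d - 1` as a sum of powers
`2^k` with `k < d`. Peeling off the top power shows by induction on `d` that writing
`t·2^d - 1` this way takes at least `d + 2t - 2` summands; for `t = 1` this gives at least `d`
summands, with equality only for the binary expansion `1 + 2 + ⋯ + 2^(d-1)`. So the coordinate
sum is minimised over the integer points exactly at the all-ones vector, which is therefore an
exposed point, in particular a vertex, of the integer hull.
-/

open Finset

section Vertex

variable {E : Type*} [AddCommGroup E] [Module ℝ E]

theorem convex_insert_setOf_lt_s14 (f : E →ₗ[ℝ] ℝ) (v : E) :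
    Convex ℝ (insert v {x | f v < f x}) := by
  have hle : ∀ {x}, x ∈ insert v {x | f v < f x} → f v ≤ f x := by
    rintro x (rfl | hx)
    exacts [le_rfl, hx.le]
  have strict :
      ∀ {x y}, f v ≤ f x → f v < f y → openSegment ℝ x y ⊆ {x | f v < f x} := by
    rintro x y hx hy _ ⟨a, b, ha, hb, hab, rfl⟩
    simp only [Set.mem_ofPred_eq, map_add, map_smul, smul_eq_mul]
    have hfv : a * f v + b * f v = f v := by rw [← add_mul, hab, one_mul]
    linarith [mul_le_mul_of_nonneg_left hx ha.le, mul_lt_mul_of_pos_left hy hb]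
  refine convex_iff_openSegment_subset.2 fun x hx y hy => ?_
  rcases hy with rfl | hy
  · rcases hx with rfl | hx
    · simp [openSegment_same]
    · rw [openSegment_symm]
      exact (strict le_rfl hx).trans (Set.subset_insert _ _)
  · exact (strict (hle hx) hy).trans (Set.subset_insert _ _)

theorem notMem_convexHull_convexHull_diff_of_forall_lt {S : Set E} {v : E} (f : E →ₗ[ℝ] ℝ)
    (h : ∀ x ∈ S, x ≠ v → f v < f x) : v ∉ convexHull ℝ (convexHull ℝ S \ {v}) := by
  have hS : convexHull ℝ S ⊆ insert v {x | f v < f x} :=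
    convexHull_min (fun x hx => (eq_or_ne x v).imp id (h x hx)) (convex_insert_setOf_lt_s14 f v)
  have hdiff : convexHull ℝ S \ {v} ⊆ {x | f v < f x} := fun x hx => (hS hx.1).resolve_left hx.2
  exact fun hv => lt_irrefl (f v) (convexHull_min hdiff (convex_halfSpace_gt f.isLinear _) hv)

end Vertex

theorem isVertex_convexHull_of_forall_lt {n : ℕ} {S : Set (Fin n → ℝ)} {v : Fin n → ℝ}
    (f : (Fin n → ℝ) →ₗ[ℝ] ℝ) (hv : v ∈ S) (h : ∀ x ∈ S, x ≠ v → f v < f x) :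
    IsVertex (convexHull ℝ S) v :=
  ⟨subset_convexHull ℝ S hv, notMem_convexHull_convexHull_diff_of_forall_lt f h⟩

section PowersOfTwo

variable {d : ℕ}

theorem pos_of_sum_two_pow_mul_add_one_eq {w : Fin d → ℤ} {t : ℤ} (hw : 0 ≤ w)
    (h : ∑ k : Fin d, 2 ^ (k : ℕ) * w k + 1 = t * 2 ^ d) : 0 < t := by
  have hsum : 0 ≤ ∑ k : Fin d, 2 ^ (k : ℕ) * w k :=
    sum_nonneg fun k _ => mul_nonneg (by positivity) (hw k)
  exact pos_of_mul_pos_left (by omega) (by positivity : (0 : ℤ) ≤ 2 ^ d)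

theorem sum_two_pow_mul_castSucc_add_one_eq {w : Fin (d + 1) → ℤ} {t : ℤ}
    (h : ∑ k : Fin (d + 1), 2 ^ (k : ℕ) * w k + 1 = t * 2 ^ (d + 1)) :
    ∑ k : Fin d, 2 ^ (k : ℕ) * w k.castSucc + 1 = (2 * t - w (Fin.last d)) * 2 ^ d := by
  rw [Fin.sum_univ_castSucc, pow_succ] at h
  simp only [Fin.val_castSucc, Fin.val_last] at h
  linear_combination h

theorem add_two_mul_le_sum_of_sum_two_pow_mul_add_one_eq {w : Fin d → ℤ} {t : ℤ}
    (hw : 0 ≤ w) (h : ∑ k : Fin d, 2 ^ (k : ℕ) * w k + 1 = t * 2 ^ d) :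
    d + 2 * t ≤ ∑ k, w k + 2 := by
  induction d generalizing t with
  | zero =>
    simp only [univ_eq_empty, sum_empty, zero_add, pow_zero, mul_one] at h
    simp [← h]
  | succ d ih =>
    have h' := sum_two_pow_mul_castSucc_add_one_eq h
    have hrest := ih (w := fun k => w k.castSucc) (fun k => hw _) h'
    have hlast := pos_of_sum_two_pow_mul_add_one_eq (w := fun k => w k.castSucc)
      (fun k => hw _) h'
    rw [Fin.sum_univ_castSucc]
    push_cast
    linarith

theorem eq_one_of_sum_two_pow_mul_add_one_eq {w : Fin d → ℤ} (hw : 0 ≤ w)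
    (h : ∑ k : Fin d, 2 ^ (k : ℕ) * w k + 1 = 2 ^ d) (hsum : ∑ k, w k = d) : w = 1 := by
  induction d with
  | zero => exact Subsingleton.elim _ _
  | succ d ih =>
    have h' := sum_two_pow_mul_castSucc_add_one_eq (h.trans (one_mul _).symm)
    have hlast_lt := pos_of_sum_two_pow_mul_add_one_eq (w := fun k => w k.castSucc)
      (fun k => hw _) h'
    have hlast_ge := add_two_mul_le_sum_of_sum_two_pow_mul_add_one_eq
      (w := fun k => w k.castSucc) (fun k => hw _) h'
    rw [Fin.sum_univ_castSucc] at hsum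
    push_cast at hsum
    -- `hlast_lt` gives `w (last d) < 2`; if it were `0`, the other `d` coefficients would
    -- represent `2^(d+1) - 1` and, by `hlast_ge`, sum to at least `d + 2`.
    have hlast : w (Fin.last d) = 1 := by linarith
    have hinit := ih (w := fun k => w k.castSucc) (fun k => hw _) (by rw [h', hlast]; ring)
      (by linarith)
    ext k
    induction k using Fin.lastCases with
    | last => exact hlast
    | cast k => exact congrFun hinit k

end PowersOfTwo

theorem sum_finProdFinEquiv {M : Type*} [AddCommMonoid M] {m d : ℕ} (z : Fin (m * d) → M) :
    ∑ i, z i = ∑ j : Fin m, ∑ k : Fin d, z (finProdFinEquiv (j, k)) := by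
  rw [← finProdFinEquiv.sum_comp, Fintype.sum_prod_type]

/-- Column `finProdFinEquiv (j, k) = k + d * j` carries `2^k` in row `j` and `0` elsewhere. -/
def binaryBlockMatrix (m d : ℕ) : Matrix (Fin m) (Fin (m * d)) ℤ :=
  (of fun (j : Fin m) (p : Fin m × Fin d) => if p.1 = j then (2 : ℤ) ^ (p.2 : ℕ) else 0)
    |>.submatrix id finProdFinEquiv.symm

section binaryBlockMatrix

variable {m d : ℕ}

theorem binaryBlockMatrix_apply (j j' : Fin m) (k : Fin d) :
    binaryBlockMatrix m d j (finProdFinEquiv (j', k)) = if j' = j then 2 ^ (k : ℕ) else 0 := by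
  simp [binaryBlockMatrix]

theorem abs_binaryBlockMatrix_le (j : Fin m) (i : Fin (m * d)) :
    |binaryBlockMatrix m d j i| ≤ 2 ^ (d - 1) := by
  obtain ⟨⟨j', k⟩, rfl⟩ := finProdFinEquiv.surjective i
  rw [binaryBlockMatrix_apply]
  split_ifs
  · rw [abs_of_nonneg (by positivity)]
    exact pow_le_pow_right₀ one_le_two (by omega)
  · simp

theorem binaryBlockMatrix_mulVec_eq_iff (z : Fin (m * d) → ℤ) :
    binaryBlockMatrix m d *ᵥ z = (fun _ => 2 ^ d - 1) ↔
      ∀ j, ∑ k : Fin d, 2 ^ (k : ℕ) * z (finProdFinEquiv (j, k)) + 1 = 2 ^ d := by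
  rw [binaryBlockMatrix, submatrix_mulVec_equiv, funext_iff]
  refine forall_congr' fun j => ?_
  simp [mulVec, dotProduct, Fintype.sum_prod_type, ite_mul, eq_sub_iff_add_eq]

theorem le_sum_block_of_binaryBlockMatrix_mulVec_eq {z : Fin (m * d) → ℤ} (hz : 0 ≤ z)
    (h : binaryBlockMatrix m d *ᵥ z = fun _ => 2 ^ d - 1) (j : Fin m) :
    (d : ℤ) ≤ ∑ k : Fin d, z (finProdFinEquiv (j, k)) := by
  have := add_two_mul_le_sum_of_sum_two_pow_mul_add_one_eq
    (w := fun k => z (finProdFinEquiv (j, k))) (fun k => hz _)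
    (((binaryBlockMatrix_mulVec_eq_iff z).1 h j).trans (one_mul _).symm)
  linarith

theorem mul_le_sum_of_binaryBlockMatrix_mulVec_eq {z : Fin (m * d) → ℤ} (hz : 0 ≤ z)
    (h : binaryBlockMatrix m d *ᵥ z = fun _ => 2 ^ d - 1) : (m * d : ℤ) ≤ ∑ i, z i := by
  have := sum_le_sum fun j (_ : j ∈ univ) => le_sum_block_of_binaryBlockMatrix_mulVec_eq hz h j
  simpa [sum_finProdFinEquiv] using this

theorem eq_one_of_binaryBlockMatrix_mulVec_eq {z : Fin (m * d) → ℤ} (hz : 0 ≤ z)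
    (h : binaryBlockMatrix m d *ᵥ z = fun _ => 2 ^ d - 1) (hsum : ∑ i, z i = m * d) :
    z = 1 := by
  have hblocks : ∑ _j : Fin m, (d : ℤ) = ∑ j, ∑ k : Fin d, z (finProdFinEquiv (j, k)) := by
    simp [← sum_finProdFinEquiv, hsum]
  rw [sum_eq_sum_iff_of_le fun j _ => le_sum_block_of_binaryBlockMatrix_mulVec_eq hz h j]
    at hblocks
  ext i
  obtain ⟨⟨j, k⟩, rfl⟩ := finProdFinEquiv.surjective i
  exact congrFun (eq_one_of_sum_two_pow_mul_add_one_eq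
    (w := fun k => z (finProdFinEquiv (j, k))) (fun k => hz _)
    ((binaryBlockMatrix_mulVec_eq_iff z).1 h j) (hblocks j (mem_univ j)).symm) k

theorem isVertex_integerHull_binaryBlockMatrix :
    IsVertex (integerHull (binaryBlockMatrix m d) fun _ => 2 ^ d - 1) (fun _ => 1) := by
  refine isVertex_convexHull_of_forall_lt (∑ i, LinearMap.proj i) ?_ ?_
  · refine ⟨1, fun _ => zero_le_one, (binaryBlockMatrix_mulVec_eq_iff 1).2 fun _ => ?_,
      by simp⟩
    simpa [Fin.sum_univ_eq_sum_range (fun k => (2 : ℤ) ^ k), ← eq_sub_iff_add_eq]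
      using geom_sum_mul (2 : ℤ) d
  · rintro _ ⟨z, hz, h, rfl⟩ hne
    have hlt : (m * d : ℤ) < ∑ i, z i :=
      (mul_le_sum_of_binaryBlockMatrix_mulVec_eq hz h).lt_of_ne fun hsum => hne <| by
        simp [eq_one_of_binaryBlockMatrix_mulVec_eq hz h hsum.symm]
    simpa using (Int.cast_lt (R := ℝ)).2 hlt

end binaryBlockMatrix

/-- For every `m, d ≥ 1` there is an integer `m × md` matrix with largest absolute
entry `Δ = 2^{d-1}` and a right-hand side `b` such that the all-ones vector is a
vertex of the integer hull with full support `md = m·log₂(Δ) + m`. -/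
theorem stmt14 (m d : ℕ) (hm : 1 ≤ m) (hd : 1 ≤ d) :
    ∃ (A : Matrix (Fin m) (Fin (m * d)) ℤ) (b : Fin m → ℤ),
      (∀ j i, |A j i| ≤ 2 ^ (d - 1)) ∧ (∃ j i, |A j i| = 2 ^ (d - 1)) ∧
      IsVertex (integerHull A b) (fun _ => 1) ∧
      (Function.support (fun _ : Fin (m * d) => (1 : ℝ))).ncard = m * d ∧
      ((m * d : ℕ) : ℝ) = m * Real.logb 2 ((2 : ℝ) ^ (d - 1)) + m := by
  refine ⟨binaryBlockMatrix m d, fun _ => 2 ^ d - 1, abs_binaryBlockMatrix_le, ?_,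
    isVertex_integerHull_binaryBlockMatrix, ?_, ?_⟩
  · exact ⟨⟨0, hm⟩, finProdFinEquiv (⟨0, hm⟩, ⟨d - 1, by omega⟩),
      by simp [binaryBlockMatrix_apply]⟩
  · rw [Function.support_const one_ne_zero, Set.ncard_univ, Nat.card_eq_fintype_card,
      Fintype.card_fin]
  · rw [Real.logb_pow, Real.logb_self_eq_one one_lt_two, mul_one, Nat.cast_sub hd]
    push_cast
    ring
end

section
/- Let A be an integer m×n matrix with rows a^{(1)},...,a^{(m)}, m' < m, β ∈ ℤ^{m'}, and let S_{A,β} = { b[m'+1] : b ∈ A·{0,1}^n, b[i] = β[i] for i = 1,...,m' }. Then for any subset 𝕏 ⊆ ℝ, |S_{A,β}| ≤ ⌈ dist_{1,𝕏}(a^{(m'+1)}; (a^{(1)},...,a^{(m')})) ⌉ + 1, where dist_{1,𝕏}(a; (v₁,...,v_k)) = min over λ₁,...,λ_k ∈ 𝕏 of ‖a − Σ λ_i v_i‖₁. -/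
/-!
Subtracting `∑ λᵢ a^{(i)}` from `a^{(m'+1)}` does not change the differences
`a^{(m'+1)}x − a^{(m'+1)}y` between points `x, y ∈ {0,1}^n` that agree on the first `m'`
constraints, and each such difference is at most the `ℓ₁`-norm of the residual row since
`|xₖ − yₖ| ≤ 1`. The attained values therefore lie in an integer interval of length
`⌈‖a^{(m'+1)} − ∑ λᵢ a^{(i)}‖₁⌉`.
-/

open Matrix

theorem Int.ncard_le_of_forall_sub_le {S : Set ℤ} {d : ℤ} (hd : 0 ≤ d)
    (hS : ∀ a ∈ S, ∀ b ∈ S, a - b ≤ d) : (S.ncard : ℤ) ≤ d + 1 := by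
  rcases S.eq_empty_or_nonempty with rfl | ⟨c, hc⟩
  · simp only [Set.ncard_empty, Nat.cast_zero]
    omega
  have hbdd : BddBelow S := ⟨c - d, fun a ha => by linarith [hS c hc a ha]⟩
  have hmin := Int.csInf_mem ⟨c, hc⟩ hbdd
  have hsub : S ⊆ Set.Icc (sInf S) (sInf S + d) := fun a ha =>
    ⟨csInf_le hbdd ha, by linarith [hS a ha _ hmin]⟩
  calc (S.ncard : ℤ) ≤ (Set.Icc (sInf S) (sInf S + d)).ncard := by
        exact_mod_cast Set.ncard_le_ncard hsub (Set.finite_Icc _ _)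
    _ = d + 1 := by
        rw [← Finset.coe_Icc, Set.ncard_coe_finset, Int.card_Icc, Int.toNat_of_nonneg] <;> omega

theorem Finset.sum_mul_le_sum_abs {ι : Type*} (s : Finset ι) (r u : ι → ℝ)
    (hu : ∀ k ∈ s, |u k| ≤ 1) : ∑ k ∈ s, r k * u k ≤ ∑ k ∈ s, |r k| :=
  Finset.sum_le_sum fun k hk =>
    calc r k * u k ≤ |r k| * |u k| := (le_abs_self _).trans (abs_mul _ _).le
      _ ≤ |r k| := mul_le_of_le_one_right (abs_nonneg _) (hu k hk)

section Residual

variable {ι κ : Type*} [Fintype κ] (A : Matrix ι κ ℤ) (j : ι) (F : Finset ι) (lam : ι → ℝ)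

theorem mulVec_sub_mulVec_eq_sum_residual_mul {x y : κ → ℤ}
    (hxy : ∀ i ∈ F, (A *ᵥ x) i = (A *ᵥ y) i) :
    (((A *ᵥ x) j - (A *ᵥ y) j : ℤ) : ℝ) =
      ∑ k, ((A j k : ℝ) - ∑ i ∈ F, lam i * A i k) * ((x k : ℝ) - y k) := by
  have hrow : ∀ i, (((A *ᵥ x) i - (A *ᵥ y) i : ℤ) : ℝ) = ∑ k, (A i k : ℝ) * ((x k : ℝ) - y k) :=
    fun i => by simp [mulVec, dotProduct, mul_sub]
  have hzero : ∀ i ∈ F, ∑ k, (A i k : ℝ) * ((x k : ℝ) - y k) = 0 := fun i hi => by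
    rw [← hrow, hxy i hi, sub_self, Int.cast_zero]
  simp only [sub_mul, Finset.sum_sub_distrib, Finset.sum_mul, ← hrow j]
  rw [Finset.sum_comm]
  simp only [mul_assoc, ← Finset.mul_sum]
  rw [Finset.sum_eq_zero fun i hi => by rw [hzero i hi, mul_zero], sub_zero]

theorem mulVec_sub_mulVec_le_residual_norm {x y : κ → ℤ}
    (hx : ∀ k, x k = 0 ∨ x k = 1) (hy : ∀ k, y k = 0 ∨ y k = 1)
    (hxy : ∀ i ∈ F, (A *ᵥ x) i = (A *ᵥ y) i) :
    (((A *ᵥ x) j - (A *ᵥ y) j : ℤ) : ℝ) ≤ ∑ k, |(A j k : ℝ) - ∑ i ∈ F, lam i * A i k| := by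
  rw [mulVec_sub_mulVec_eq_sum_residual_mul A j F lam hxy]
  refine Finset.sum_mul_le_sum_abs _ _ _ fun k _ => ?_
  rcases hx k with h | h <;> rcases hy k with h' | h' <;> norm_num [h, h']

theorem ncard_mulVec_values_le (β : ι → ℤ) :
    ({c : ℤ | ∃ x : κ → ℤ, (∀ k, x k = 0 ∨ x k = 1) ∧ (∀ i ∈ F, (A *ᵥ x) i = β i) ∧
        (A *ᵥ x) j = c}.ncard : ℝ) ≤
      (⌈∑ k, |(A j k : ℝ) - ∑ i ∈ F, lam i * A i k|⌉ : ℤ) + 1 := by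
  set S := {c : ℤ | ∃ x : κ → ℤ, (∀ k, x k = 0 ∨ x k = 1) ∧ (∀ i ∈ F, (A *ᵥ x) i = β i) ∧
    (A *ᵥ x) j = c}
  set d := ∑ k, |(A j k : ℝ) - ∑ i ∈ F, lam i * A i k|
  have hdiff : ∀ a ∈ S, ∀ b ∈ S, a - b ≤ ⌈d⌉ := by
    rintro _ ⟨x, hx, hxβ, rfl⟩ _ ⟨y, hy, hyβ, rfl⟩
    have hxy : ∀ i ∈ F, (A *ᵥ x) i = (A *ᵥ y) i := fun i hi => by rw [hxβ i hi, hyβ i hi]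
    exact Int.cast_le.mp <|
      (mulVec_sub_mulVec_le_residual_norm A j F lam hx hy hxy).trans (Int.le_ceil _)
  have hceil : 0 ≤ ⌈d⌉ := Int.ceil_nonneg (Finset.sum_nonneg fun _ _ => abs_nonneg _)
  exact_mod_cast Int.ncard_le_of_forall_sub_le hceil hdiff

end Residual

theorem stmt15_general {m n : ℕ} (A : Matrix (Fin m) (Fin n) ℤ) (m' : ℕ) (hm' : m' < m)
    (β : Fin m → ℤ) (lam : Fin m → ℝ) :
    ({c : ℤ | ∃ x : Fin n → ℤ, (∀ i, x i = 0 ∨ x i = 1) ∧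
        (∀ i : Fin m, (i : ℕ) < m' → A.mulVec x i = β i) ∧
        A.mulVec x ⟨m', hm'⟩ = c}.ncard : ℝ) ≤
      (⌈∑ k : Fin n, |(A ⟨m', hm'⟩ k : ℝ) -
          ∑ i ∈ Finset.univ.filter (fun i : Fin m => (i : ℕ) < m'),
            lam i * (A i k : ℝ)|⌉ : ℤ) + 1 := by
  simpa only [Finset.mem_filter, Finset.mem_univ, true_and] using
    ncard_mulVec_values_le A ⟨m', hm'⟩ (Finset.univ.filter fun i : Fin m => (i : ℕ) < m') lam β

/-- Bound on the number of values that coordinate `m'` (0-indexed) of `A·x` can take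
over `x ∈ {0,1}^n` once the first `m'` coordinates are fixed to `β`: it is at most
`⌈‖a^{(m'+1)} − Σ λᵢ a^{(i)}‖₁⌉ + 1` for any coefficients `λᵢ ∈ 𝕏` (in particular
for minimizing ones). -/
theorem stmt15 {m n : ℕ} (A : Matrix (Fin m) (Fin n) ℤ) (m' : ℕ) (hm' : m' < m)
    (β : Fin m → ℤ) (𝕏 : Set ℝ) (lam : Fin m → ℝ)
    (hlam : ∀ i : Fin m, (i : ℕ) < m' → lam i ∈ 𝕏) :
    ({c : ℤ | ∃ x : Fin n → ℤ, (∀ i, x i = 0 ∨ x i = 1) ∧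
        (∀ i : Fin m, (i : ℕ) < m' → A.mulVec x i = β i) ∧
        A.mulVec x ⟨m', hm'⟩ = c}.ncard : ℝ) ≤
      (⌈∑ k : Fin n, |(A ⟨m', hm'⟩ k : ℝ) -
          ∑ i ∈ Finset.univ.filter (fun i : Fin m => (i : ℕ) < m'),
            lam i * (A i k : ℝ)|⌉ : ℤ) + 1 :=
  stmt15_general A m' hm' β lam
end

section
/- Let A ∈ ℤ^{m×n} with rows a^{(1)},...,a^{(m)}. For a permutation π of {1,...,m}, define d₁^π = ‖a^{(π(1))}‖₁ and d_{i+1}^π = ⌈dist_{1,ℝ}(a^{(π(i+1))}; (a^{(π(1))},...,a^{(π(i))}))⌉. Then |A·{0,1}^n| ≤ min over π of ∏_{i=1}^m (d_i^π + 1). -/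
open Matrix

/-- `|A·{0,1}^n|` is bounded by `∏ᵢ (dᵢ^π + 1)` for every ordering `π` of the rows,
where `d₁^π = ‖a^{(π(1))}‖₁` and `d_{i+1}^π` is (the ceiling of) the ℓ₁-distance of
`a^{(π(i+1))}` to any real linear combination of the earlier rows (in particular the
closest one). -/
theorem stmt16 {m n : ℕ} (A : Matrix (Fin m) (Fin n) ℤ) (π : Equiv.Perm (Fin m))
    (lam : Fin m → Fin m → ℝ) :
    ({y : Fin m → ℤ | ∃ x : Fin n → ℤ, (∀ i, x i = 0 ∨ x i = 1) ∧
        A.mulVec x = y}.ncard : ℝ) ≤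
      ∏ i : Fin m,
        ((⌈∑ k : Fin n, |(A (π i) k : ℝ) -
            ∑ j ∈ Finset.univ.filter (fun j : Fin m => (j : ℕ) < (i : ℕ)),
              lam i j * (A (π j) k : ℝ)|⌉ : ℤ) + 1) := by
  classical
  set S : Set (Fin m → ℤ) := {y : Fin m → ℤ | ∃ x : Fin n → ℤ, (∀ i, x i = 0 ∨ x i = 1) ∧
        A.mulVec x = y} with hS
  set F : Fin m → Finset (Fin m) :=
    fun i => Finset.univ.filter (fun j : Fin m => (j : ℕ) < (i : ℕ)) with hF
  set c : Fin m → Fin n → ℝ :=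
    fun i k => (A (π i) k : ℝ) - ∑ j ∈ F i, lam i j * (A (π j) k : ℝ) with hc
  set D : Fin m → ℝ := fun i => ∑ k, |c i k| with hD
  set d : Fin m → ℤ := fun i => ⌈D i⌉ with hd
  set L : Fin m → ℝ := fun i => ∑ k, min (c i k) 0 with hL
  set T : (Fin m → ℤ) → Fin m → ℝ :=
    fun y i => (∑ j ∈ F i, lam i j * (y (π j) : ℝ)) + L i with hT
  set Φ : (Fin m → ℤ) → Fin m → ℤ := fun y i => y (π i) - ⌈T y i⌉ with hΦ
  -- key estimate for members of S
  have hmem : ∀ y ∈ S, ∀ i, Φ y i ∈ Finset.Icc 0 (d i) := by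
    rintro y ⟨x, hx01, hAx⟩ i
    have hy : ∀ r, (y r : ℝ) = ∑ k, (A r k : ℝ) * (x k : ℝ) := by
      intro r
      rw [← hAx]
      simp [Matrix.mulVec, dotProduct]
    have hkey : (y (π i) : ℝ) - ∑ j ∈ F i, lam i j * (y (π j) : ℝ)
        = ∑ k, c i k * (x k : ℝ) := by
      simp only [hy, Finset.mul_sum, hc]
      rw [Finset.sum_comm, ← Finset.sum_sub_distrib]
      refine Finset.sum_congr rfl fun k _ => ?_
      rw [sub_mul, Finset.sum_mul]
      ring_nf
    have hlow : L i ≤ ∑ k, c i k * (x k : ℝ) := by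
      refine Finset.sum_le_sum fun k _ => ?_
      rcases hx01 k with h | h <;> simp [h, min_le_right, min_le_left]
    have hup : ∑ k, c i k * (x k : ℝ) ≤ L i + D i := by
      rw [hL, hD, ← Finset.sum_add_distrib]
      refine Finset.sum_le_sum fun k _ => ?_
      rcases le_total (c i k) 0 with h' | h'
      · rw [abs_of_nonpos h', min_eq_left h']
        rcases hx01 k with h | h <;> simp [h] <;> linarith
      · rw [abs_of_nonneg h', min_eq_right h']
        rcases hx01 k with h | h <;> simp [h] <;> linarith
    have hceil : T y i ≤ (y (π i) : ℝ) := by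
      rw [hT]
      simp only
      linarith [hkey, hlow]
    rw [Finset.mem_Icc]
    constructor
    · simp only [hΦ, sub_nonneg]
      exact Int.ceil_le.mpr hceil
    · have h1 : ((y (π i) - ⌈T y i⌉ : ℤ) : ℝ) ≤ D i := by
        push_cast
        have h2 : T y i ≤ (⌈T y i⌉ : ℝ) := Int.le_ceil _
        have h3 : (y (π i) : ℝ) ≤ T y i + D i := by
          rw [hT]; simp only; linarith [hkey, hup]
        linarith
      exact le_trans (Int.le_floor.mpr h1) (Int.floor_le_ceil _)
  -- injectivity on S (indeed everywhere)
  have hinj : Set.InjOn Φ S := by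
    rintro y - y' - h
    have key : ∀ N : ℕ, ∀ i : Fin m, (i : ℕ) ≤ N → y (π i) = y' (π i) := by
      intro N
      induction N using Nat.strong_induction_on with
      | _ N ih =>
        intro i hi
        have hTeq : T y i = T y' i := by
          rw [hT]
          simp only
          congr 1
          refine Finset.sum_congr rfl fun j hj => ?_
          have hjlt : (j : ℕ) < (i : ℕ) := by
            simpa [hF] using hj
          rw [ih (j : ℕ) (lt_of_lt_of_le hjlt hi) j le_rfl]
        have := congrFun h i
        simp only [hΦ, hTeq] at this
        omega
    funext a
    have := key m (π⁻¹ a) (Nat.le_of_lt_succ (Nat.lt_succ_of_lt (π⁻¹ a).isLt))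
    simpa using this
  -- counting
  have hd0 : ∀ i, 0 ≤ d i := fun i => Int.ceil_nonneg (Finset.sum_nonneg fun k _ => abs_nonneg _)
  have hsub : Φ '' S ⊆ ↑(Fintype.piFinset fun i => Finset.Icc (0 : ℤ) (d i)) := by
    rintro - ⟨y, hy, rfl⟩
    simp only [Finset.coe_sort_coe, Finset.mem_coe, Fintype.mem_piFinset]
    exact hmem y hy
  have hcard : S.ncard ≤ (Fintype.piFinset fun i => Finset.Icc (0 : ℤ) (d i)).card := by
    rw [← Set.ncard_image_of_injOn hinj, ← Set.ncard_coe_finset]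
    exact Set.ncard_le_ncard hsub (Finset.finite_toSet _)
  have hceq : ((Fintype.piFinset fun i => Finset.Icc (0 : ℤ) (d i)).card : ℝ)
      = ((∏ i, (d i + 1) : ℤ) : ℝ) := by
    rw [Fintype.card_piFinset]
    push_cast
    refine Finset.prod_congr rfl fun i _ => ?_
    rw [Int.card_Icc]
    have : (0:ℤ) ≤ d i + 1 - 0 := by linarith [hd0 i]
    have h2 : ((d i + 1 - 0).toNat : ℤ) = d i + 1 := by
      rw [Int.toNat_of_nonneg this]; ring
    exact_mod_cast h2
  calc (S.ncard : ℝ) ≤ _ := by exact_mod_cast hcard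
    _ = _ := hceq
end
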